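/- arXiv:1801.05318 — 7 statements merged into one kernel-verified Lean document; each statement's English description precedes it below -/
import Mathlib

section
/- In any graph G with no isolated vertices, every vertex with at least two leaf neighbors belongs to every total forcing set, and for each such vertex, all but at most one of its leaf neighbors belong to every total forcing set. -/
/-- The forcing process: vertices that eventually get colored starting from `S`.
A colored vertex with exactly one uncolored neighbor forces that neighbor. -/
inductive SimpleGraph.Forced {V : Type*} (G : SimpleGraph V) (S : Set V) : V → Prop
  | init (v : V) (hv : v ∈ S) : SimpleGraph.Forced G S v
  | force (u w : V) (hu : SimpleGraph.Forced G S u) (hadj : G.Adj u w)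
      (huniq : ∀ x, G.Adj u x → x ≠ w → SimpleGraph.Forced G S x) :
      SimpleGraph.Forced G S w

/-- `S` is a zero forcing set if the forcing process colors every vertex. -/
def SimpleGraph.IsZeroForcingSet {V : Type*} (G : SimpleGraph V) (S : Set V) : Prop :=
  ∀ v, G.Forced S v

/-- The zero forcing number `Z(G)`. -/
noncomputable def SimpleGraph.zeroForcingNumber {V : Type*} (G : SimpleGraph V) : ℕ :=
  sInf {n | ∃ S : Set V, G.IsZeroForcingSet S ∧ S.ncard = n}

/-- A total forcing set: a zero forcing set inducing a subgraph without isolated vertices. -/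
def SimpleGraph.IsTotalForcingSet {V : Type*} (G : SimpleGraph V) (S : Set V) : Prop :=
  G.IsZeroForcingSet S ∧ ∀ v ∈ S, ∃ u ∈ S, G.Adj v u

/-- The total forcing number `F_t(G)`. -/
noncomputable def SimpleGraph.totalForcingNumber {V : Type*} (G : SimpleGraph V) : ℕ :=
  sInf {n | ∃ S : Set V, G.IsTotalForcingSet S ∧ S.ncard = n}

/-- A set of vertices that is the vertex set of a path (as a subgraph) of `G`. -/
def SimpleGraph.IsPathSet {V : Type*} (G : SimpleGraph V) (P : Set V) : Prop :=
  ∃ (u v : V) (w : G.Walk u v), w.IsPath ∧ {x | x ∈ w.support} = P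

/-- A path cover: a collection of vertex-disjoint paths partitioning the vertex set. -/
def SimpleGraph.IsPathCover {V : Type*} (G : SimpleGraph V) (P : Set (Set V)) : Prop :=
  (∀ Q ∈ P, G.IsPathSet Q) ∧ P.PairwiseDisjoint id ∧ ⋃₀ P = Set.univ

/-- The path cover number `pc(G)`. -/
noncomputable def SimpleGraph.pathCoverNumber {V : Type*} (G : SimpleGraph V) : ℕ :=
  sInf {n | ∃ P : Set (Set V), G.IsPathCover P ∧ P.ncard = n}

/-- The matching number `α'(G)`. -/
noncomputable def SimpleGraph.matchingNumber {V : Type*} (G : SimpleGraph V) : ℕ :=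
  sSup {n | ∃ M : G.Subgraph, M.IsMatching ∧ M.edgeSet.ncard = n}

/-- A leaf is a vertex with exactly one neighbor. -/
def SimpleGraph.IsLeaf {V : Type*} (G : SimpleGraph V) (v : V) : Prop :=
  (G.neighborSet v).ncard = 1

lemma leaf_nbr_eq {V : Type*} (G : SimpleGraph V) {w u u' : V}
    (hl : G.IsLeaf w) (h1 : G.Adj w u) (h2 : G.Adj w u') : u = u' := by
  obtain ⟨a, ha⟩ := Set.ncard_eq_one.mp hl
  have h1' : u ∈ G.neighborSet w := h1
  have h2' : u' ∈ G.neighborSet w := h2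
  rw [ha] at h1' h2'
  rw [h1', h2']

lemma key_lemma {V : Type*} (G : SimpleGraph V) (S : Set V) (v : V) :
    ∀ w, G.Forced S w → G.Adj v w → G.IsLeaf w → w ∉ S →
      ∀ u, u ≠ w → G.Adj v u → G.IsLeaf u → u ∉ S → ¬ G.Forced S u := by
  intro w hw
  induction hw with
  | init w hwS => intro _ _ hwS'; exact absurd hwS hwS'
  | force u' w hu hadj huniq _ ih =>
    intro hvw hlw hwS u hne hvu hlu huS hFu
    -- u' = v
    have hu'v : u' = v := leaf_nbr_eq G hlw hadj.symm hvw.symm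
    subst hu'v
    have hFw : G.Forced S w := SimpleGraph.Forced.force u' w hu hadj huniq
    exact ih u hvu hne hvu hlu huS w hne.symm hvw hlw hwS hFw

theorem stmt4 {V : Type*} [Fintype V] (G : SimpleGraph V)
    (hisol : ∀ v : V, ∃ u, G.Adj v u) (v : V)
    (hleaf : 2 ≤ {u | G.Adj v u ∧ G.IsLeaf u}.ncard)
    (S : Set V) (hS : G.IsTotalForcingSet S) :
    v ∈ S ∧ ({u | G.Adj v u ∧ G.IsLeaf u} \ S).ncard ≤ 1 := by
  set A : Set V := {u | G.Adj v u ∧ G.IsLeaf u} with hA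
  have hsub : (A \ S).Subsingleton := by
    intro x hx y hy
    by_contra hxy
    exact key_lemma G S v x (hS.1 x) hx.1.1 hx.1.2 hx.2 y (Ne.symm hxy) hy.1.1 hy.1.2 hy.2
      (hS.1 y)
  have hcard : (A \ S).ncard ≤ 1 := by
    rcases hsub.eq_empty_or_singleton with h | ⟨a, h⟩ <;> simp [h]
  refine ⟨?_, hcard⟩
  -- some leaf neighbor is in S
  have hAS : (A ∩ S).Nonempty := by
    by_contra hempty
    rw [Set.not_nonempty_iff_eq_empty] at hempty
    have : A \ S = A := by
      ext x; simp only [Set.mem_diff]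
      refine ⟨fun h => h.1, fun h => ⟨h, fun hxS => ?_⟩⟩
      exact absurd (Set.mem_inter h hxS) (by rw [hempty]; exact Set.notMem_empty x)
    rw [this] at hcard
    omega
  obtain ⟨u, huA, huS⟩ := hAS
  obtain ⟨x, hxS, hadj⟩ := hS.2 u huS
  have : x = v := leaf_nbr_eq G huA.2 hadj huA.1.symm
  rwa [this] at hxS
end

section
/- If G is a graph with no isolated vertices, then F_t(G) ≤ 2 Z(G), where F_t is the total forcing number and Z is the zero forcing number. -/
lemma forced_mono {V : Type*} {G : SimpleGraph V} {S T : Set V} (hST : S ⊆ T) :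
    ∀ {v : V}, G.Forced S v → G.Forced T v := by
  intro v h
  induction h with
  | init v hv => exact .init v (hST hv)
  | force u w hu hadj huniq ih1 ih2 => exact .force u w ih1 hadj fun x hx hxw => ih2 x hx hxw

theorem stmt5 {V : Type*} [Fintype V] (G : SimpleGraph V)
    (hisol : ∀ v : V, ∃ u, G.Adj v u) :
    G.totalForcingNumber ≤ 2 * G.zeroForcingNumber := by
  have hne : {n | ∃ S : Set V, G.IsZeroForcingSet S ∧ S.ncard = n}.Nonempty :=
    ⟨(Set.univ : Set V).ncard, Set.univ, fun v => .init v (Set.mem_univ v), rfl⟩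
  obtain ⟨S, hS, hScard⟩ := Nat.sInf_mem hne
  choose f hf using hisol
  set T := S ∪ f '' S with hT
  have hTzf : G.IsZeroForcingSet T := fun v =>
    forced_mono Set.subset_union_left (hS v)
  have htot : G.IsTotalForcingSet T := by
    refine ⟨hTzf, fun v hv => ?_⟩
    rcases hv with hv | ⟨w, hw, rfl⟩
    · exact ⟨f v, Or.inr ⟨v, hv, rfl⟩, hf v⟩
    · exact ⟨w, Or.inl hw, (hf w).symm⟩
  have h1 : G.totalForcingNumber ≤ T.ncard := Nat.sInf_le ⟨T, htot, rfl⟩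
  have h2 : T.ncard ≤ S.ncard + (f '' S).ncard := Set.ncard_union_le _ _
  have h3 : (f '' S).ncard ≤ S.ncard := Set.ncard_image_le (Set.toFinite S)
  unfold SimpleGraph.zeroForcingNumber
  omega
end

section
/- For every graph G, the zero forcing number is at least the path cover number: Z(G) ≥ pc(G). -/
/-!
Run the forcing process from a zero forcing set `S` one force at a time and record, for each
`s ∈ S`, the chain of forces starting at `s`. A vertex `u` that forces `w` must be the current end
of its chain, since every earlier chain vertex has already forced and therefore has no uncolored
neighbor left. So each force extends one chain by an edge, the chains stay vertex-disjoint paths,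
and once everything is colored they form a path cover with at most `|S|` paths.
-/

namespace SimpleGraph

variable {V : Type*} {G : SimpleGraph V}

theorem Forced.mono {S T : Set V} (hST : S ⊆ T) {v : V} (h : G.Forced S v) : G.Forced T v := by
  induction h with
  | init v hv => exact .init v (hST hv)
  | force u w _ hadj _ ihu ih => exact .force u w ihu hadj ih

theorem IsZeroForcingSet.mono {S T : Set V} (hS : G.IsZeroForcingSet S) (hST : S ⊆ T) :
    G.IsZeroForcingSet T :=
  fun v => (hS v).mono hST

theorem Forced.mem_of_no_force {C : Set V}
    (hC : ∀ u ∈ C, ∀ w ∉ C, G.Adj u w → ∃ x, G.Adj u x ∧ x ≠ w ∧ x ∉ C) {v : V}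
    (h : G.Forced C v) : v ∈ C := by
  induction h with
  | init v hv => exact hv
  | force u w _ hadj _ ihu ih =>
    by_contra hw
    obtain ⟨x, hux, hxw, hxC⟩ := hC u ihu w hw hadj
    exact hxC (ih x hux hxw)

theorem IsZeroForcingSet.exists_force {C : Set V} (hC : G.IsZeroForcingSet C)
    (hne : C ≠ Set.univ) :
    ∃ u ∈ C, ∃ w ∉ C, G.Adj u w ∧ ∀ x, G.Adj u x → x ≠ w → x ∈ C := by
  by_contra! h
  exact hne (Set.eq_univ_of_forall fun v => (hC v).mem_of_no_force h)

/-- The forcing chains of a forcing process from `S` that has colored `C` so far: `f s` is the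
chain started at `s ∈ S`, a path ending at `(f s).1`. Every chain vertex other than the end has
already forced, so all its neighbors are colored. -/
structure ForcingChains (G : SimpleGraph V) (S C : Set V) (f : ∀ s : V, Σ e : V, G.Walk s e) :
    Prop where
  isPath : ∀ s ∈ S, (f s).2.IsPath
  eq_of_mem : ∀ s ∈ S, ∀ t ∈ S, ∀ v ∈ (f s).2.support, v ∈ (f t).2.support → s = t
  mem_iff : ∀ v, v ∈ C ↔ ∃ s ∈ S, v ∈ (f s).2.support
  adj_mem : ∀ s ∈ S, ∀ v ∈ (f s).2.support, v ≠ (f s).1 → ∀ x, G.Adj v x → x ∈ C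

theorem forcingChains_nil (S : Set V) : G.ForcingChains S S fun s => ⟨s, .nil⟩ where
  isPath _ _ := Walk.IsPath.nil
  eq_of_mem s _ t _ v hs ht := by simp_all
  mem_iff v := by simp
  adj_mem s _ v hv hvs := by simp_all

namespace ForcingChains

variable {S C : Set V} {f : ∀ s : V, Σ e : V, G.Walk s e}

theorem mem_of_mem_support (hf : G.ForcingChains S C f) {s : V} (hs : s ∈ S) {v : V}
    (hv : v ∈ (f s).2.support) : v ∈ C :=
  (hf.mem_iff v).2 ⟨s, hs, hv⟩

theorem concat [DecidableEq V] (hf : G.ForcingChains S C f) {s : V} (hs : s ∈ S) {w : V}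
    (hw : w ∉ C) (hadj : G.Adj (f s).1 w) (hforce : ∀ x, G.Adj (f s).1 x → x ≠ w → x ∈ C) :
    G.ForcingChains S (insert w C) (Function.update f s ⟨w, (f s).2.concat hadj⟩) := by
  have hws : w ∉ (f s).2.support := fun h => hw (hf.mem_of_mem_support hs h)
  have mem_update : ∀ t v, v ∈ (Function.update f s ⟨w, (f s).2.concat hadj⟩ t).2.support ↔
      v ∈ (f t).2.support ∨ (t = s ∧ v = w) := by
    intro t v
    by_cases ht : t = s
    · subst ht; rw [Function.update_self]; simp
    · rw [Function.update_of_ne ht]; simp [ht]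
  refine ⟨fun t ht => ?_, fun t ht t' ht' v hv hv' => ?_, fun v => ?_, fun t ht v hv hve x hx => ?_⟩
  · by_cases hts : t = s
    · subst hts; rw [Function.update_self]; exact (hf.isPath t ht).concat hws hadj
    · rw [Function.update_of_ne hts]; exact hf.isPath t ht
  · rw [mem_update] at hv hv'
    rcases hv with hv | ⟨hts, hvw⟩ <;> rcases hv' with hv' | ⟨hts', hvw'⟩
    · exact hf.eq_of_mem t ht t' ht' v hv hv'
    · exact absurd (hvw' ▸ hf.mem_of_mem_support ht hv) hw
    · exact absurd (hvw ▸ hf.mem_of_mem_support ht' hv') hw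
    · exact hts.trans hts'.symm
  · simp only [mem_update, Set.mem_insert_iff, hf.mem_iff]
    constructor
    · rintro (rfl | ⟨t, ht, hv⟩)
      · exact ⟨s, hs, .inr ⟨rfl, rfl⟩⟩
      · exact ⟨t, ht, .inl hv⟩
    · rintro ⟨t, ht, hv | ⟨rfl, rfl⟩⟩
      · exact .inr ⟨t, ht, hv⟩
      · exact .inl rfl
  · rw [Set.mem_insert_iff]
    by_cases hts : t = s
    · subst hts
      rw [Function.update_self] at hv hve
      have hv : v ∈ (f t).2.support := by simpa [hve] using hv
      by_cases hend : v = (f t).1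
      · rw [hend] at hx
        by_cases hxw : x = w
        · exact .inl hxw
        · exact .inr (hforce x hx hxw)
      · exact .inr (hf.adj_mem t ht v hv hend x hx)
    · rw [Function.update_of_ne hts] at hv hve
      exact .inr (hf.adj_mem t ht v hv hve x hx)

theorem exists_insert (hf : G.ForcingChains S C f) {u w : V} (hu : u ∈ C) (hw : w ∉ C)
    (hadj : G.Adj u w) (hforce : ∀ x, G.Adj u x → x ≠ w → x ∈ C) :
    ∃ g, G.ForcingChains S (insert w C) g := by
  classical
  obtain ⟨s, hs, hus⟩ := (hf.mem_iff u).1 hu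
  obtain rfl : u = (f s).1 := by
    by_contra hne
    exact hw (hf.adj_mem s hs u hus hne w hadj)
  exact ⟨_, hf.concat hs hw hadj hforce⟩

theorem isPathCover (hf : G.ForcingChains S Set.univ f) :
    G.IsPathCover ((fun s => {x | x ∈ (f s).2.support}) '' S) := by
  refine ⟨?_, ?_, ?_⟩
  · rintro _ ⟨s, hs, rfl⟩
    exact ⟨s, _, (f s).2, hf.isPath s hs, rfl⟩
  · rintro _ ⟨s, hs, rfl⟩ _ ⟨t, ht, rfl⟩ hne
    refine Set.disjoint_left.2 fun v hvs hvt => hne ?_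
    rw [hf.eq_of_mem s hs t ht v hvs hvt]
  · refine Set.eq_univ_of_forall fun v => ?_
    obtain ⟨s, hs, hv⟩ := (hf.mem_iff v).1 (Set.mem_univ v)
    exact ⟨_, ⟨s, hs, rfl⟩, hv⟩

end ForcingChains

theorem IsZeroForcingSet.exists_forcingChains [Finite V] {S : Set V}
    (hS : G.IsZeroForcingSet S) : ∃ f, G.ForcingChains S Set.univ f := by
  refine (WellFoundedGT.induction_top (P := fun C => S ⊆ C ∧ ∃ f, G.ForcingChains S C f)
    ⟨S, subset_rfl, _, forcingChains_nil S⟩ ?_).2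
  rintro C hC ⟨hSC, f, hf⟩
  obtain ⟨u, hu, w, hw, hadj, hforce⟩ := (hS.mono hSC).exists_force hC
  exact ⟨insert w C, Set.ssubset_insert hw, hSC.trans (Set.subset_insert w C),
    hf.exists_insert hu hw hadj hforce⟩

theorem IsZeroForcingSet.pathCoverNumber_le_ncard [Finite V] {S : Set V}
    (hS : G.IsZeroForcingSet S) : G.pathCoverNumber ≤ S.ncard := by
  obtain ⟨f, hf⟩ := hS.exists_forcingChains
  calc G.pathCoverNumber ≤ ((fun s => {x | x ∈ (f s).2.support}) '' S).ncard :=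
        Nat.sInf_le ⟨_, hf.isPathCover, rfl⟩
    _ ≤ S.ncard := Set.ncard_image_le S.toFinite

theorem exists_isZeroForcingSet_ncard_eq (G : SimpleGraph V) :
    ∃ S, G.IsZeroForcingSet S ∧ S.ncard = G.zeroForcingNumber :=
  Nat.sInf_mem (s := {n | ∃ S, G.IsZeroForcingSet S ∧ S.ncard = n})
    ⟨_, Set.univ, fun v => .init v (Set.mem_univ v), rfl⟩

end SimpleGraph

theorem stmt6 {V : Type*} [Fintype V] (G : SimpleGraph V) :
    G.pathCoverNumber ≤ G.zeroForcingNumber := by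
  obtain ⟨S, hS, hcard⟩ := G.exists_isZeroForcingSet_ncard_eq
  exact hcard ▸ hS.pathCoverNumber_le_ncard
end

section
/- If a tree T contains an edge e = uv with deg(v) = 2 and deg(u) ≤ 2, and T' is the tree obtained from T by contracting the edge e, then pc(T) = pc(T'). -/
/-!
The contraction `T/uv` is undone by subdividing its edge `uw`, where `w` is the other neighbour
of `v`; both inequalities come from pulling an optimal path cover back along a map of vertex
sets. Along the inclusion `V ∖ {v} → V`, the path through `v` just loses `v`: if `v` was an
inner vertex, its two path neighbours are `u` and `w`, which are adjacent in `T/uv`. Along the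
contraction map `V → V ∖ {v}`, the path through `u` gains `v`: if it uses the edge `uw`, `v`
subdivides it; otherwise `u` is an end of the path, because besides `w` it has at most one
neighbour in `T/uv`, and `v` is attached there.
-/

namespace SimpleGraph

variable {V W : Type*} {G T : SimpleGraph V} {H : SimpleGraph W} {u v : V}

theorem isPathSet_iff_exists_list {Q : Set V} :
    G.IsPathSet Q ↔
      ∃ l : List V, l ≠ [] ∧ l.Nodup ∧ l.IsChain G.Adj ∧ {x | x ∈ l} = Q := by
  constructor
  · rintro ⟨a, b, p, hp, rfl⟩
    exact ⟨p.support, p.support_ne_nil, hp.support_nodup, p.isChain_adj_support, rfl⟩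
  · rintro ⟨l, hne, hnd, hc, rfl⟩
    refine ⟨_, _, Walk.ofSupport l hne hc, ?_, by rw [Walk.support_ofSupport]⟩
    rwa [Walk.isPath_def, Walk.support_ofSupport]

theorem isPathCover_range_singleton : G.IsPathCover (Set.range fun x => {x}) := by
  refine ⟨?_, ?_, by rw [Set.sUnion_range, Set.iUnion_of_singleton]⟩
  · rintro _ ⟨x, rfl⟩
    exact isPathSet_iff_exists_list.2 ⟨[x], by simp, by simp, .singleton x, by simp⟩
  · rintro _ ⟨x, rfl⟩ _ ⟨y, rfl⟩ hxy
    exact Set.disjoint_singleton.2 fun h => hxy (h ▸ rfl)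

theorem IsPathCover.preimage {P : Set (Set V)} (hP : G.IsPathCover P) (f : W → V)
    (hf : ∀ Q ∈ P, (f ⁻¹' Q).Nonempty → H.IsPathSet (f ⁻¹' Q)) :
    H.IsPathCover (Set.preimage f '' P \ {∅}) := by
  obtain ⟨hpath, hdisj, hcover⟩ := hP
  refine ⟨?_, ?_, ?_⟩
  · rintro _ ⟨⟨Q, hQ, rfl⟩, hne⟩
    exact hf Q hQ (Set.nonempty_iff_ne_empty.2 hne)
  · rintro _ ⟨⟨Q₁, hQ₁, rfl⟩, -⟩ _ ⟨⟨Q₂, hQ₂, rfl⟩, -⟩ hne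
    exact (hdisj hQ₁ hQ₂ fun h => hne (h ▸ rfl)).preimage f
  · refine Set.eq_univ_of_forall fun x => ?_
    obtain ⟨Q, hQ, hxQ⟩ := Set.mem_sUnion.1 (hcover ▸ Set.mem_univ (f x))
    exact ⟨f ⁻¹' Q, ⟨⟨Q, hQ, rfl⟩, Set.nonempty_iff_ne_empty.1 ⟨x, hxQ⟩⟩, hxQ⟩

theorem pathCoverNumber_le_of_isPathSet_preimage [Finite V] (f : W → V)
    (hf : ∀ Q, G.IsPathSet Q → (f ⁻¹' Q).Nonempty → H.IsPathSet (f ⁻¹' Q)) :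
    H.pathCoverNumber ≤ G.pathCoverNumber := by
  obtain ⟨P, hP, hcard⟩ : G.pathCoverNumber ∈ {n | ∃ P, G.IsPathCover P ∧ P.ncard = n} :=
    Nat.sInf_mem ⟨_, _, isPathCover_range_singleton, rfl⟩
  calc H.pathCoverNumber ≤ (Set.preimage f '' P \ {∅}).ncard :=
        Nat.sInf_le ⟨_, hP.preimage f fun Q hQ => hf Q (hP.1 Q hQ), rfl⟩
    _ ≤ (Set.preimage f '' P).ncard := Set.ncard_sdiff_singleton_le _ _
    _ ≤ G.pathCoverNumber := hcard ▸ Set.ncard_image_le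

theorem eq_of_adj_of_ncard_neighborSet_le_two [Finite V] {a b x y : V}
    (h : (G.neighborSet a).ncard ≤ 2) (hb : G.Adj a b) (hx : G.Adj a x) (hy : G.Adj a y)
    (hxb : x ≠ b) (hyb : y ≠ b) : x = y := by
  by_contra hxy
  exact h.not_gt ((Set.two_lt_ncard_iff).2 ⟨b, x, y, hb, hx, hy, hxb.symm, hyb.symm, hxy⟩)

/-- `T/uv`, with the merged vertex represented by `u`. -/
def contractEdge (T : SimpleGraph V) (u v : V) : SimpleGraph {x : V // x ≠ v} :=
  fromRel fun a b => T.Adj a.1 b.1 ∨ (a.1 = u ∧ T.Adj v b.1)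

theorem contractEdge_adj_of_adj {a b : {x : V // x ≠ v}} (h : T.Adj a b) :
    (T.contractEdge u v).Adj a b :=
  (fromRel_adj _ _ _).2 ⟨fun hab => h.ne (congrArg Subtype.val hab), .inl (.inl h)⟩

theorem contractEdge_adj_of_adj_of_adj [Finite V] (huv : T.Adj u v)
    (hv : (T.neighborSet v).ncard ≤ 2) {a b : {x : V // x ≠ v}} (ha : T.Adj v a)
    (hb : T.Adj v b) (hab : a ≠ b) : (T.contractEdge u v).Adj a b := by
  refine (fromRel_adj _ _ _).2 ⟨hab, ?_⟩
  by_cases hau : a.1 = u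
  · exact .inl (.inr ⟨hau, hb⟩)
  by_cases hbu : b.1 = u
  · exact .inr (.inr ⟨hbu, ha⟩)
  exact absurd (Subtype.ext (eq_of_adj_of_ncard_neighborSet_le_two hv huv.symm ha hb hau hbu)) hab

theorem adj_of_contractEdge_adj {a b : {x : V // x ≠ v}} (h : (T.contractEdge u v).Adj a b)
    (ha : a.1 ≠ u) (hb : b.1 ≠ u) : T.Adj a b := by
  obtain ⟨-, (h | ⟨hau, -⟩) | (h | ⟨hbu, -⟩)⟩ := (fromRel_adj _ _ _).1 h
  exacts [h, absurd hau ha, h.symm, absurd hbu hb]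

theorem adj_or_adj_of_contractEdge_adj {a b : {x : V // x ≠ v}}
    (h : (T.contractEdge u v).Adj a b) (hau : a.1 = u) : T.Adj u b ∨ T.Adj v b := by
  obtain ⟨hab, (h | ⟨-, h⟩) | (h | ⟨hbu, -⟩)⟩ := (fromRel_adj _ _ _).1 h
  exacts [.inl (hau ▸ h), .inr h, .inl (hau ▸ h.symm),
    absurd (Subtype.ext (hau.trans hbu.symm)) hab]

theorem isChain_map_val_of_notMem {huv : u ≠ v} {l : List {x : V // x ≠ v}}
    (hu : ⟨u, huv⟩ ∉ l) (hl : l.IsChain (T.contractEdge u v).Adj) :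
    (l.map Subtype.val).IsChain T.Adj :=
  (List.isChain_map _).2 <| hl.imp_of_mem_imp fun a b ha hb h =>
    adj_of_contractEdge_adj h (fun hau => hu ((show a = ⟨u, huv⟩ from Subtype.ext hau) ▸ ha))
      (fun hbu => hu ((show b = ⟨u, huv⟩ from Subtype.ext hbu) ▸ hb))

section

variable [DecidableEq V]

def contractEdgeMap (huv : u ≠ v) (x : V) : {x : V // x ≠ v} :=
  if h : x = v then ⟨u, huv⟩ else ⟨x, h⟩

theorem contractEdgeMap_of_ne (huv : u ≠ v) {x : V} (hx : x ≠ v) :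
    contractEdgeMap huv x = ⟨x, hx⟩ :=
  dif_neg hx

theorem preimage_contractEdgeMap_of_mem (huv : u ≠ v) {S : Set {x : V // x ≠ v}}
    (hu : ⟨u, huv⟩ ∈ S) : contractEdgeMap huv ⁻¹' S = insert v (Subtype.val '' S) := by
  ext x
  by_cases hx : x = v
  · simp [hx, contractEdgeMap, hu]
  · simp [contractEdgeMap_of_ne huv hx, hx]

theorem preimage_contractEdgeMap_of_notMem (huv : u ≠ v) {S : Set {x : V // x ≠ v}}
    (hu : ⟨u, huv⟩ ∉ S) : contractEdgeMap huv ⁻¹' S = Subtype.val '' S := by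
  ext x
  by_cases hx : x = v
  · simp [hx, contractEdgeMap, hu]
  · simp [contractEdgeMap_of_ne huv hx, hx]

theorem isChain_contractEdgeMap_of_notMem (huv : u ≠ v) {l : List V} (hv : v ∉ l)
    (hl : l.IsChain T.Adj) :
    l.IsChain fun a b => (T.contractEdge u v).Adj (contractEdgeMap huv a) (contractEdgeMap huv b) :=
  hl.imp_of_mem_imp fun a b ha hb h => by
    rw [contractEdgeMap_of_ne huv (ne_of_mem_of_not_mem ha hv),
      contractEdgeMap_of_ne huv (ne_of_mem_of_not_mem hb hv)]
    exact contractEdge_adj_of_adj h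

theorem isChain_erase_contractEdgeMap [Finite V] (huv : T.Adj u v)
    (hv : (T.neighborSet v).ncard ≤ 2) {l : List V} (hnd : l.Nodup) (hl : l.IsChain T.Adj) :
    (l.erase v).IsChain fun a b =>
      (T.contractEdge u v).Adj (contractEdgeMap huv.ne a) (contractEdgeMap huv.ne b) := by
  by_cases hvl : v ∈ l
  · obtain ⟨l₁, l₂, rfl⟩ := List.append_of_mem hvl
    obtain ⟨hv₁₂, hnd₁₂⟩ := List.nodup_cons.1 (List.nodup_middle.1 hnd)
    have hv₁ : v ∉ l₁ := fun h => hv₁₂ (List.mem_append_left _ h)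
    have hv₂ : v ∉ l₂ := fun h => hv₁₂ (List.mem_append_right _ h)
    obtain ⟨hl₁, hl₂, hjoin⟩ := List.isChain_append.1 hl
    obtain ⟨hvy, hl₂⟩ := List.isChain_cons.1 hl₂
    rw [List.erase_append_right _ hv₁, List.erase_cons_head]
    refine (isChain_contractEdgeMap_of_notMem huv.ne hv₁ hl₁).append
      (isChain_contractEdgeMap_of_notMem huv.ne hv₂ hl₂) fun x hx y hy => ?_
    have hx₁ := List.mem_of_mem_getLast? hx
    have hy₂ := List.mem_of_mem_head? hy
    rw [contractEdgeMap_of_ne huv.ne (ne_of_mem_of_not_mem hx₁ hv₁),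
      contractEdgeMap_of_ne huv.ne (ne_of_mem_of_not_mem hy₂ hv₂)]
    exact contractEdge_adj_of_adj_of_adj huv hv (hjoin x hx v rfl).symm (hvy y hy)
      fun h => (List.nodup_append.1 hnd₁₂).2.2 x hx₁ y hy₂ (congrArg Subtype.val h)
  · rw [List.erase_of_not_mem hvl]
    exact isChain_contractEdgeMap_of_notMem huv.ne hvl hl

end

theorem IsPathSet.preimage_val_contractEdge [Finite V] (huv : T.Adj u v)
    (hv : (T.neighborSet v).ncard ≤ 2) {Q : Set V} (hQ : T.IsPathSet Q)
    (hne : (Subtype.val ⁻¹' Q : Set {x : V // x ≠ v}).Nonempty) :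
    (T.contractEdge u v).IsPathSet (Subtype.val ⁻¹' Q) := by
  classical
  obtain ⟨l, -, hnd, hl, rfl⟩ := isPathSet_iff_exists_list.1 hQ
  have hmem : ∀ a, a ∈ (l.erase v).map (contractEdgeMap huv.ne) ↔ a.1 ∈ l := by
    intro a
    simp only [List.mem_map, hnd.mem_erase_iff]
    constructor
    · rintro ⟨x, ⟨hxv, hx⟩, rfl⟩
      rwa [contractEdgeMap_of_ne huv.ne hxv]
    · exact fun ha => ⟨a, ⟨a.2, ha⟩, contractEdgeMap_of_ne huv.ne a.2⟩
  refine isPathSet_iff_exists_list.2 ⟨_, ?_, ?_,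
    (List.isChain_map _).2 (isChain_erase_contractEdgeMap huv hv hnd hl), Set.ext hmem⟩
  · obtain ⟨a, ha⟩ := hne
    exact List.ne_nil_of_mem ((hmem a).2 ha)
  · refine (hnd.erase v).map_on fun x hx y hy hxy => ?_
    rw [contractEdgeMap_of_ne huv.ne (hnd.mem_erase_iff.1 hx).1,
      contractEdgeMap_of_ne huv.ne (hnd.mem_erase_iff.1 hy).1] at hxy
    exact congrArg Subtype.val hxy

theorem exists_append_cons_eq_or_eq_reverse [Finite V] (huv : T.Adj u v)
    (hv : (T.neighborSet v).ncard ≤ 2) (hu : (T.neighborSet u).ncard ≤ 2)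
    {l : List {x : V // x ≠ v}} (hnd : l.Nodup) (hl : l.IsChain (T.contractEdge u v).Adj)
    (hul : ⟨u, huv.ne⟩ ∈ l) :
    ∃ l₁ l₂ : List {x : V // x ≠ v},
      (l₁ ++ ⟨u, huv.ne⟩ :: l₂ = l ∨ l₁ ++ ⟨u, huv.ne⟩ :: l₂ = l.reverse) ∧
      (∀ x ∈ l₁.getLast?, T.Adj u x) ∧ ∀ y ∈ l₂.head?, T.Adj v y := by
  obtain ⟨l₁, l₂, rfl⟩ := List.append_of_mem hul
  obtain ⟨-, hl₂, hjoin⟩ := List.isChain_append.1 hl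
  obtain ⟨-, hnd₂, hdisj⟩ := List.nodup_append.1 hnd
  have hxy : ∀ x ∈ l₁.getLast?, ∀ y ∈ l₂.head?, x.1 ≠ y.1 := fun x hx y hy h =>
    hdisj x (List.mem_of_mem_getLast? hx) y (.tail _ (List.mem_of_mem_head? hy)) (Subtype.ext h)
  have hxu : ∀ x ∈ l₁.getLast?, x.1 ≠ u := fun x hx h =>
    hdisj x (List.mem_of_mem_getLast? hx) _ List.mem_cons_self (Subtype.ext h)
  have hyu : ∀ y ∈ l₂.head?, y.1 ≠ u := fun y hy h =>
    (List.nodup_cons.1 hnd₂).1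
      ((show y = ⟨u, huv.ne⟩ from Subtype.ext h) ▸ List.mem_of_mem_head? hy)
  have key : ((∀ x ∈ l₁.getLast?, T.Adj u x) ∧ ∀ y ∈ l₂.head?, T.Adj v y) ∨
      ((∀ y ∈ l₂.head?, T.Adj u y) ∧ ∀ x ∈ l₁.getLast?, T.Adj v x) := by
    have hx : ∀ x ∈ l₁.getLast?, T.Adj u x ∨ T.Adj v x := fun x hx =>
      adj_or_adj_of_contractEdge_adj (hjoin x hx _ rfl).symm rfl
    have hy : ∀ y ∈ l₂.head?, T.Adj u y ∨ T.Adj v y := fun y hy =>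
      adj_or_adj_of_contractEdge_adj ((List.isChain_cons.1 hl₂).1 y hy) rfl
    have hnot_both_u : ∀ x ∈ l₁.getLast?, ∀ y ∈ l₂.head?, ¬(T.Adj u x ∧ T.Adj u y) :=
      fun x hx y hy h => hxy x hx y hy <|
        eq_of_adj_of_ncard_neighborSet_le_two hu huv h.1 h.2 x.2 y.2
    have hnot_both_v : ∀ x ∈ l₁.getLast?, ∀ y ∈ l₂.head?, ¬(T.Adj v x ∧ T.Adj v y) :=
      fun x hx y hy h => hxy x hx y hy <|
        eq_of_adj_of_ncard_neighborSet_le_two hv huv.symm h.1 h.2 (hxu x hx) (hyu y hy)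
    clear hjoin hxy hxu hyu
    generalize l₁.getLast? = o₁ at *
    generalize l₂.head? = o₂ at *
    cases o₁ <;> cases o₂ <;> simp_all <;> tauto
  rcases key with ⟨h₁, h₂⟩ | ⟨h₁, h₂⟩
  · exact ⟨l₁, l₂, .inl rfl, h₁, h₂⟩
  · exact ⟨l₂.reverse, l₁.reverse, .inr (by simp), by simpa using h₁,
      by simpa using h₂⟩

theorem isPathSet_insert_image_val (huv : T.Adj u v) {l₁ l₂ : List {x : V // x ≠ v}}
    (hnd : (l₁ ++ ⟨u, huv.ne⟩ :: l₂).Nodup)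
    (hl : (l₁ ++ ⟨u, huv.ne⟩ :: l₂).IsChain (T.contractEdge u v).Adj)
    (h₁ : ∀ x ∈ l₁.getLast?, T.Adj u x) (h₂ : ∀ y ∈ l₂.head?, T.Adj v y) :
    T.IsPathSet (insert v (Subtype.val '' {a | a ∈ l₁ ++ ⟨u, huv.ne⟩ :: l₂})) := by
  set M := (l₁ ++ ⟨u, huv.ne⟩ :: l₂).map Subtype.val
  have hperm : (l₁.map Subtype.val ++ u :: v :: l₂.map Subtype.val).Perm (v :: M) := by
    simpa [M] using
      List.perm_middle (l₁ := l₁.map Subtype.val ++ [u]) (l₂ := l₂.map Subtype.val) (a := v)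
  have hvM : v ∉ M := by simp [M, huv.ne']
  obtain ⟨-, hnd₂, hdisj⟩ := List.nodup_append.1 hnd
  have hu₁ : ⟨u, huv.ne⟩ ∉ l₁ := fun h => hdisj _ h _ List.mem_cons_self rfl
  obtain ⟨hl₁, hl₂, -⟩ := List.isChain_append.1 hl
  refine isPathSet_iff_exists_list.2 ⟨_, by simp,
    hperm.nodup_iff.2 (List.nodup_cons.2 ⟨hvM, hnd.map Subtype.val_injective⟩), ?_, ?_⟩
  · refine (isChain_map_val_of_notMem hu₁ hl₁).append
      (List.isChain_cons_cons.2 ⟨huv, List.isChain_cons.2 ⟨?_,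
        isChain_map_val_of_notMem (List.nodup_cons.1 hnd₂).1 hl₂.tail⟩⟩) ?_
    · rintro _ hy
      obtain ⟨y, hy', rfl⟩ := Option.mem_map.1 (List.head?_map ▸ hy)
      exact h₂ y hy'
    · rintro _ hx _ hy
      obtain ⟨x, hx', rfl⟩ := Option.mem_map.1 (List.getLast?_map ▸ hx)
      obtain rfl := Option.mem_some_iff.1 hy
      exact (h₁ x hx').symm
  · ext x
    simp only [Set.mem_ofPred_eq, hperm.mem_iff, List.mem_cons, M, List.mem_map,
      Set.mem_insert_iff, Set.mem_image]

theorem IsPathSet.preimage_contractEdgeMap [Finite V] [DecidableEq V] (huv : T.Adj u v)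
    (hv : (T.neighborSet v).ncard ≤ 2) (hu : (T.neighborSet u).ncard ≤ 2)
    {Q : Set {x : V // x ≠ v}} (hQ : (T.contractEdge u v).IsPathSet Q) :
    T.IsPathSet (contractEdgeMap huv.ne ⁻¹' Q) := by
  obtain ⟨l, hne, hnd, hl, rfl⟩ := isPathSet_iff_exists_list.1 hQ
  by_cases hul : ⟨u, huv.ne⟩ ∈ l
  · rw [preimage_contractEdgeMap_of_mem huv.ne hul]
    obtain ⟨l₁, l₂, hl₁₂ | hl₁₂, h₁, h₂⟩ :=
      exists_append_cons_eq_or_eq_reverse huv hv hu hnd hl hul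
    · subst hl₁₂
      exact isPathSet_insert_image_val huv hnd hl h₁ h₂
    · have hrev : {a | a ∈ l} = {a | a ∈ l₁ ++ ⟨u, huv.ne⟩ :: l₂} := by simp [hl₁₂]
      rw [hrev]
      exact isPathSet_insert_image_val huv (hl₁₂ ▸ List.nodup_reverse.2 hnd)
        (hl₁₂ ▸ List.isChain_reverse.2 (hl.imp fun _ _ h => h.symm)) h₁ h₂
  · rw [preimage_contractEdgeMap_of_notMem huv.ne hul]
    refine isPathSet_iff_exists_list.2 ⟨l.map Subtype.val, by rwa [Ne, List.map_eq_nil_iff],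
      hnd.map Subtype.val_injective, isChain_map_val_of_notMem hul hl, ?_⟩
    ext x
    simp

end SimpleGraph

theorem stmt8_general {V : Type*} [Fintype V] (T : SimpleGraph V)
    (u v : V) (huv : T.Adj u v)
    (hv : (T.neighborSet v).ncard = 2) (hu : (T.neighborSet u).ncard ≤ 2) :
    T.pathCoverNumber =
      (SimpleGraph.fromRel (fun a b : {x : V // x ≠ v} =>
        T.Adj a.1 b.1 ∨ (a.1 = u ∧ T.Adj v b.1))).pathCoverNumber := by
  classical
  change T.pathCoverNumber = (T.contractEdge u v).pathCoverNumber
  refine le_antisymm ?_ ?_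
  · exact SimpleGraph.pathCoverNumber_le_of_isPathSet_preimage
      (SimpleGraph.contractEdgeMap huv.ne) fun _ hQ _ => hQ.preimage_contractEdgeMap huv hv.le hu
  · exact SimpleGraph.pathCoverNumber_le_of_isPathSet_preimage
      Subtype.val fun _ hQ hne => hQ.preimage_val_contractEdge huv hv.le hne

theorem stmt8 {V : Type*} [Fintype V] [DecidableEq V] (T : SimpleGraph V)
    (hT : T.IsTree) (u v : V) (huv : T.Adj u v)
    (hv : (T.neighborSet v).ncard = 2) (hu : (T.neighborSet u).ncard ≤ 2) :
    T.pathCoverNumber =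
      (SimpleGraph.fromRel (fun a b : {x : V // x ≠ v} =>
        T.Adj a.1 b.1 ∨ (a.1 = u ∧ T.Adj v b.1))).pathCoverNumber :=
  stmt8_general T u v huv hv hu
end

section
/- For any nontrivial tree T, if F_t(T) = 2 pc(T) then T has a unique minimum path cover and every path in this cover starts and ends at distinct leaves of T. -/
/-!
Root the tree at a vertex `v` that has a neighbour `u` on another path of a path cover `P`
but at most one neighbour on its own path. Take the top (the vertex nearest `v`) of every
path, and for every top other than `v` one neighbour of it, on its own path when possible.
This set of at most `2|P| - 1` vertices is total (`v` is adjacent to the top `u`), and it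
forces everything, in order of depth: a vertex `x` outside it is not a top, so its parent `z`
lies on its path, and every other child of `z` is either the top of its own path or lies on
the path of `x`, in which case `z` is a top (a path vertex has at most two path-neighbours)
and that child is the neighbour chosen for `z`. Hence `F_t(T) < 2|P|`.

So if `F_t(T) = 2 pc(T)`, in a minimum path cover every vertex adjacent to another path is
interior to its own. The ends of each path are then leaves, and no path is a single vertex.
Two minimum covers agree on every edge: if `x` is the lower end of a deepest edge on which
they disagree, the cover cutting that edge joins `x` to two of its children, and the other
cover, which uses the edge above `x`, cannot use both.
-/

namespace SimpleGraph

variable {V : Type*} {T : SimpleGraph V} {P P' : Set (Set V)}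

theorem IsAcyclic.mk_start_mem_edges_of_adj (hT : T.IsAcyclic) {a b y : V} {w : T.Walk a b}
    (hw : w.IsPath) (hay : T.Adj a y) (hy : y ∈ w.support) : s(a, y) ∈ w.edges := by
  have hnil : ¬ w.Nil := fun h =>
    hay.ne (by simpa [Walk.nil_iff_support_eq.mp h] using hy : y = a).symm
  rw [hT.eq_snd_of_adj_start hw hay hy]
  exact w.mk_start_snd_mem_edges hnil

theorem IsAcyclic.isChordless_of_isPath (hT : T.IsAcyclic) {a b : V} {w : T.Walk a b}
    (hw : w.IsPath) : w.IsChordless := by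
  rw [Walk.isChordless_iff_forall_mem_edges]
  intro x y hx hy hxy
  obtain ⟨w₀, w₁, hw₀, hw₁, rfl⟩ := hw.mem_support_iff_exists_append.mp hx
  rw [Walk.edges_append, List.mem_append]
  rcases (Walk.mem_support_append_iff w₀ w₁).mp hy with hy | hy
  · left
    simpa [Sym2.eq_swap] using
      hT.mk_start_mem_edges_of_adj hw₀.reverse hxy (w₀.support_reverse ▸ List.mem_reverse.mpr hy)
  · exact Or.inr (hT.mk_start_mem_edges_of_adj hw₁ hxy hy)

theorem Walk.IsPath.ncard_neighborSet_toSubgraph_le_two {a b : V} {w : T.Walk a b}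
    (hw : w.IsPath) (x : V) : (w.toSubgraph.neighborSet x).ncard ≤ 2 := by
  by_cases hx : x ∈ w.support
  · obtain ⟨i, rfl, hi⟩ := Walk.mem_support_iff_exists_getVert.mp hx
    by_cases hnil : w.Nil
    · have : w.toSubgraph.neighborSet (w.getVert i) = ∅ := by
        ext y
        simp [Walk.adj_toSubgraph_iff_mem_edges, Walk.edges_eq_nil.mpr hnil]
      simp [this]
    rcases Nat.eq_zero_or_pos i with rfl | hi0
    · simp [hw.neighborSet_toSubgraph_startpoint hnil]
    rcases hi.lt_or_eq with hi | rfl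
    · exact (hw.ncard_neighborSet_toSubgraph_internal_eq_two hi0.ne' hi).le
    · simp [hw.neighborSet_toSubgraph_endpoint hnil]
  · have : w.toSubgraph.neighborSet x = ∅ := by
      ext y
      simp only [Subgraph.mem_neighborSet, Set.mem_empty_iff_false, iff_false]
      exact fun h => hx (Walk.mem_support_of_adj_toSubgraph h)
    simp [this]

theorem IsPathSet.induce_connected {p : Set V} (hp : T.IsPathSet p) : (T.induce p).Connected := by
  obtain ⟨a, b, w, -, rfl⟩ := hp
  exact w.connected_induce_support

theorem IsAcyclic.eq_or_eq_of_isPathSet (hT : T.IsAcyclic) {p : Set V} (hp : T.IsPathSet p)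
    {x c₁ c₂ c₃ : V} (hx : x ∈ p) (h₁ : c₁ ∈ p) (h₂ : c₂ ∈ p) (h₃ : c₃ ∈ p)
    (hx₁ : T.Adj x c₁) (hx₂ : T.Adj x c₂) (hx₃ : T.Adj x c₃) (hne : c₁ ≠ c₂) :
    c₃ = c₁ ∨ c₃ = c₂ := by
  obtain ⟨a, b, w, hw, rfl⟩ := hp
  have hsub : {c₁, c₂, c₃} ⊆ w.toSubgraph.neighborSet x := by
    have hc := hT.isChordless_of_isPath hw
    rintro c (rfl | rfl | rfl) <;>
      simpa [Walk.adj_toSubgraph_iff_mem_edges] using hc.mem_edges hx ‹_› ‹_›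
  by_contra! h
  have h3 : ({c₁, c₂, c₃} : Set V).ncard = 3 :=
    Set.ncard_eq_three.mpr ⟨c₁, c₂, c₃, hne, h.1.symm, h.2.symm, rfl⟩
  have := Set.ncard_le_ncard hsub (w.finite_neighborSet_toSubgraph)
  linarith [hw.ncard_neighborSet_toSubgraph_le_two x]

theorem exists_isPath_of_induce_preconnected {s : Set V} (hs : (T.induce s).Preconnected)
    {x y : V} (hx : x ∈ s) (hy : y ∈ s) :
    ∃ q : T.Walk x y, q.IsPath ∧ ∀ z ∈ q.support, z ∈ s := by
  obtain ⟨q, hq⟩ := (hs ⟨x, hx⟩ ⟨y, hy⟩).exists_isPath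
  refine ⟨q.map (Embedding.induce (G := T) s).toHom,
    hq.map (Embedding.induce (G := T) s).injective, ?_⟩
  intro z hz
  obtain ⟨⟨z, hzs⟩, -, rfl⟩ := List.mem_map.mp (Walk.support_map _ q ▸ hz)
  exact hzs

def SamePart (P : Set (Set V)) (x y : V) : Prop := ∃ p ∈ P, x ∈ p ∧ y ∈ p

theorem SamePart.symm {x y : V} (h : SamePart P x y) : SamePart P y x :=
  let ⟨p, hp, hx, hy⟩ := h
  ⟨p, hp, hy, hx⟩

namespace IsPathCover

theorem exists_mem (hP : T.IsPathCover P) (x : V) : ∃ p ∈ P, x ∈ p :=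
  Set.mem_sUnion.mp (hP.2.2 ▸ Set.mem_univ x)

theorem eq_of_mem (hP : T.IsPathCover P) {p q : Set V} (hp : p ∈ P) (hq : q ∈ P) {x : V}
    (hxp : x ∈ p) (hxq : x ∈ q) : p = q :=
  hP.2.1.elim hp hq (Set.not_disjoint_iff.mpr ⟨x, hxp, hxq⟩)

theorem samePart_iff (hP : T.IsPathCover P) {p : Set V} (hp : p ∈ P) {x y : V} (hx : x ∈ p) :
    SamePart P x y ↔ y ∈ p :=
  ⟨fun ⟨_, hq, hxq, hyq⟩ => hP.eq_of_mem hq hp hxq hx ▸ hyq, fun hy => ⟨p, hp, hx, hy⟩⟩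

theorem samePart_refl (hP : T.IsPathCover P) (x : V) : SamePart P x x :=
  let ⟨p, hp, hx⟩ := hP.exists_mem x
  ⟨p, hp, hx, hx⟩

theorem samePart_trans (hP : T.IsPathCover P) {x y z : V} (hxy : SamePart P x y)
    (hyz : SamePart P y z) : SamePart P x z :=
  let ⟨p, hp, hx, hy⟩ := hxy
  ⟨p, hp, hx, (hP.samePart_iff hp hy).mp hyz⟩

theorem eq_or_eq_of_samePart (hP : T.IsPathCover P) (hT : T.IsAcyclic) {x c₁ c₂ c₃ : V}
    (h₁ : SamePart P x c₁) (h₂ : SamePart P x c₂) (h₃ : SamePart P x c₃)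
    (hx₁ : T.Adj x c₁) (hx₂ : T.Adj x c₂) (hx₃ : T.Adj x c₃) (hne : c₁ ≠ c₂) :
    c₃ = c₁ ∨ c₃ = c₂ := by
  obtain ⟨p, hp, hx, h₁⟩ := h₁
  rw [hP.samePart_iff hp hx] at h₂ h₃
  exact hT.eq_or_eq_of_isPathSet (hP.1 p hp) hx h₁ h₂ h₃ hx₁ hx₂ hx₃ hne

end IsPathCover

def HasTwoNeighborsInPart (T : SimpleGraph V) (P : Set (Set V)) (x : V) : Prop :=
  ∃ c₁ c₂, c₁ ≠ c₂ ∧ T.Adj x c₁ ∧ T.Adj x c₂ ∧ SamePart P x c₁ ∧ SamePart P x c₂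

def CrossEdgesAtInteriors (T : SimpleGraph V) (P : Set (Set V)) : Prop :=
  ∀ x y, T.Adj x y → ¬ SamePart P x y → T.HasTwoNeighborsInPart P x

theorem exists_isPathCover_ncard_eq_pathCoverNumber (T : SimpleGraph V) :
    ∃ P, T.IsPathCover P ∧ P.ncard = T.pathCoverNumber := by
  have hsingletons : T.IsPathCover (Set.range fun v : V => {v}) := by
    refine ⟨?_, ?_, ?_⟩
    · rintro _ ⟨v, rfl⟩
      exact ⟨v, v, .nil, .nil, by simp⟩
    · rintro _ ⟨a, rfl⟩ _ ⟨b, rfl⟩ hab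
      exact Set.disjoint_singleton.mpr fun h => hab (h ▸ rfl)
    · ext x
      simp
  exact Nat.sInf_mem (s := {n | ∃ P : Set (Set V), T.IsPathCover P ∧ P.ncard = n})
    ⟨_, _, hsingletons, rfl⟩

theorem IsPathCover.samePart_of_forall_adj (hP : T.IsPathCover P) (hP' : T.IsPathCover P')
    (h : ∀ x y, T.Adj x y → SamePart P x y → SamePart P' x y) {x y : V}
    (hxy : SamePart P x y) : SamePart P' x y := by
  obtain ⟨p, hp, hx, hy⟩ := hxy
  suffices ∀ (a b : p) (q : (T.induce p).Walk a b), SamePart P' a b from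
    this ⟨x, hx⟩ ⟨y, hy⟩ ((hP.1 p hp).induce_connected.preconnected _ _).some
  intro a b q
  induction q with
  | nil => exact hP'.samePart_refl _
  | cons hadj _ ih =>
    exact hP'.samePart_trans (h _ _ hadj ⟨p, hp, Subtype.prop _, Subtype.prop _⟩) ih

theorem IsPathCover.subset_of_samePart_iff (hP : T.IsPathCover P) (hP' : T.IsPathCover P')
    (h : ∀ x y, SamePart P x y ↔ SamePart P' x y) : P ⊆ P' := by
  intro p hp
  obtain ⟨a, _, w, _, hw⟩ := hP.1 p hp
  have ha : a ∈ p := hw ▸ w.start_mem_support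
  obtain ⟨p', hp', ha'⟩ := hP'.exists_mem a
  convert hp'
  ext y
  rw [← hP.samePart_iff hp ha, h, hP'.samePart_iff hp' ha']

theorem IsPathCover.eq_of_samePart_iff_of_adj (hP : T.IsPathCover P) (hP' : T.IsPathCover P')
    (h : ∀ x y, T.Adj x y → (SamePart P x y ↔ SamePart P' x y)) : P = P' := by
  have hiff (x y : V) : SamePart P x y ↔ SamePart P' x y :=
    ⟨hP.samePart_of_forall_adj hP' fun a b hab => (h a b hab).1,
      hP'.samePart_of_forall_adj hP fun a b hab => (h a b hab).2⟩
  exact (hP.subset_of_samePart_iff hP' hiff).antisymm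
    (hP'.subset_of_samePart_iff hP fun x y => (hiff x y).symm)

theorem IsAcyclic.isLeaf_of_forall_adj_mem_support (hT : T.IsAcyclic) {a b : V}
    {w : T.Walk a b} (hw : w.IsPath) (hnil : ¬ w.Nil) (h : ∀ y, T.Adj a y → y ∈ w.support) :
    T.IsLeaf a := by
  have : T.neighborSet a = {w.snd} := by
    ext y
    exact ⟨fun hy => hT.eq_snd_of_adj_start hw hy (h y hy), fun hy => hy ▸ w.adj_snd hnil⟩
  simp [IsLeaf, this]

theorem IsPathCover.adj_mem_support_start (hT : T.IsAcyclic) (hP : T.IsPathCover P)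
    (hcross : T.CrossEdgesAtInteriors P) {a b : V} {w : T.Walk a b} (hw : w.IsPath)
    (hwP : {x | x ∈ w.support} ∈ P) {y : V} (hy : T.Adj a y) : y ∈ w.support := by
  have ha : a ∈ {x | x ∈ w.support} := w.start_mem_support
  by_contra hyw
  obtain ⟨c₁, c₂, hne, h₁, h₂, hs₁, hs₂⟩ := hcross a y hy (by rwa [hP.samePart_iff hwP ha])
  rw [hP.samePart_iff hwP ha] at hs₁ hs₂
  exact hne ((hT.eq_snd_of_adj_start hw h₁ hs₁).trans (hT.eq_snd_of_adj_start hw h₂ hs₂).symm)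

theorem IsPathCover.exists_isPath_isLeaf [Nontrivial V] (hT : T.IsTree) (hP : T.IsPathCover P)
    (hcross : T.CrossEdgesAtInteriors P) {p : Set V} (hp : p ∈ P) :
    ∃ (a b : V) (w : T.Walk a b), w.IsPath ∧ {x | x ∈ w.support} = p ∧ a ≠ b ∧
      T.IsLeaf a ∧ T.IsLeaf b := by
  obtain ⟨a, b, w, hw, rfl⟩ := hP.1 p hp
  have hab : a ≠ b := by
    rintro rfl
    obtain ⟨y, hy⟩ := hT.connected.preconnected.exists_adj_of_nontrivial a
    have hyw := hP.adj_mem_support_start hT.isAcyclic hcross hw hp hy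
    rw [Walk.nil_iff_support_eq.mp (Walk.isPath_iff_nil.mp hw)] at hyw
    exact hy.ne (List.mem_singleton.mp hyw).symm
  have hp' : {x | x ∈ w.reverse.support} ∈ P := by simpa using hp
  refine ⟨a, b, w, hw, rfl, hab, ?_, ?_⟩
  · exact hT.isAcyclic.isLeaf_of_forall_adj_mem_support hw (Walk.not_nil_of_ne hab)
      fun y hy => hP.adj_mem_support_start hT.isAcyclic hcross hw hp hy
  · exact hT.isAcyclic.isLeaf_of_forall_adj_mem_support hw.reverse (Walk.not_nil_of_ne hab.symm)
      fun y hy => hP.adj_mem_support_start hT.isAcyclic hcross hw.reverse hp' hy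

namespace IsTree

section Rooted

variable (hT : T.IsTree) (r : V)

noncomputable def pathToRoot (v : V) : T.Walk v r := (hT.existsUnique_path v r).exists.choose

theorem isPath_pathToRoot (v : V) : (hT.pathToRoot r v).IsPath :=
  (hT.existsUnique_path v r).exists.choose_spec

variable {r} in
theorem eq_pathToRoot {v : V} {q : T.Walk v r} (hq : q.IsPath) : q = hT.pathToRoot r v :=
  (hT.existsUnique_path v r).unique hq (hT.isPath_pathToRoot r v)

/-- The neighbour of `v` towards the root; by convention the root is its own parent. -/
noncomputable def parent (v : V) : V := (hT.pathToRoot r v).snd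

noncomputable def depth (v : V) : ℕ := (hT.pathToRoot r v).length

theorem parent_root : hT.parent r r = r := by
  rw [parent, ← hT.eq_pathToRoot Walk.IsPath.nil]
  rfl

variable {r}

theorem adj_parent {v : V} (hv : v ≠ r) : T.Adj v (hT.parent r v) :=
  Walk.adj_snd (Walk.not_nil_of_ne hv)

theorem depth_parent {v : V} (hv : v ≠ r) : hT.depth r (hT.parent r v) + 1 = hT.depth r v := by
  rw [depth, depth, parent, ← hT.eq_pathToRoot (hT.isPath_pathToRoot r v).tail]
  exact Walk.length_tail_add_one (Walk.not_nil_of_ne hv)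

theorem parent_eq_or_parent_eq_of_adj {x z : V} (h : T.Adj x z) :
    hT.parent r x = z ∨ hT.parent r z = x := by
  classical
  by_cases hz : z ∈ (hT.pathToRoot r x).support
  · exact .inl (hT.isAcyclic.eq_snd_of_adj_start (hT.isPath_pathToRoot r x) h hz).symm
  · right
    rw [parent, ← hT.eq_pathToRoot ((hT.isPath_pathToRoot r x).cons (h := h.symm) hz),
      Walk.snd_cons]

theorem ne_root_of_parent_eq {x z : V} (h : T.Adj x z) (hz : hT.parent r z = x) : z ≠ r := by
  rintro rfl
  rw [parent_root] at hz
  exact h.ne hz.symm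

theorem parent_eq_root_of_adj {u : V} (h : T.Adj r u) : hT.parent r u = r := by
  refine (hT.parent_eq_or_parent_eq_of_adj h).resolve_left fun hu => h.ne ?_
  rwa [parent_root] at hu

theorem parent_parent_ne {x : V} (hx : x ≠ r) : hT.parent r (hT.parent r x) ≠ x := by
  intro h
  have hz := hT.ne_root_of_parent_eq (hT.adj_parent hx) h
  have := hT.depth_parent hx
  have := hT.depth_parent hz
  rw [h] at this
  omega

/-- A path whose first step goes away from the root keeps doing so. -/
theorem parent_mem_support_of_parent_snd {c e : V} (q : T.Walk c e) (hq : q.IsPath)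
    (hnil : ¬ q.Nil) (hc : hT.parent r q.snd = c) : hT.parent r e ∈ q.support := by
  induction q with
  | nil => exact absurd Walk.Nil.nil hnil
  | @cons c x e h q ih =>
    rw [Walk.snd_cons] at hc
    rw [Walk.support_cons, List.mem_cons]
    by_cases hq' : q.Nil
    · exact .inl (hq'.eq ▸ hc)
    right
    rw [Walk.cons_isPath_iff] at hq
    rcases hT.parent_eq_or_parent_eq_of_adj (q.adj_snd hq') with hup | hdown
    · exact absurd (hc ▸ hup ▸ q.getVert_mem_support 1) hq.2
    · exact ih hq.1 hq' hdown

theorem eq_of_parent_not_mem {p : Set V} (hp : (T.induce p).Preconnected) {t t' : V}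
    (ht : t ∈ p) (ht' : t' ∈ p) (h : t = r ∨ hT.parent r t ∉ p)
    (h' : t' = r ∨ hT.parent r t' ∉ p) : t = t' := by
  suffices key : ∀ t t', t ∈ p → t' ∈ p → (t = r ∨ hT.parent r t ∉ p) →
      hT.parent r t' ∉ p → t = t' by
    rcases h' with rfl | h'
    · rcases h with rfl | h
      · rfl
      · exact (key t' t ht' ht (.inl rfl) h).symm
    · exact key t t' ht ht' h h'
  intro t t' ht ht' h h'
  by_contra hne
  obtain ⟨q, hq, hqp⟩ := exists_isPath_of_induce_preconnected hp ht ht'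
  have hnil : ¬ q.Nil := Walk.not_nil_of_ne hne
  rcases hT.parent_eq_or_parent_eq_of_adj (q.adj_snd hnil) with hup | hdown
  · obtain rfl : t = r := h.resolve_right
      fun hn => hn (hup ▸ hqp _ (q.getVert_mem_support 1))
    rw [parent_root] at hup
    exact (q.adj_snd hnil).ne hup
  · exact h' (hqp _ (hT.parent_mem_support_of_parent_snd q hq hnil hdown))

variable (r) in
theorem isZeroForcingSet_of_forall_sibling_mem {S : Set V} (hr : r ∈ S)
    (hS : ∀ x y, x ∉ S → y ≠ x → y ≠ r → hT.parent r y = hT.parent r x → y ∈ S) :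
    T.IsZeroForcingSet S := by
  intro x
  induction hd : hT.depth r x using Nat.strong_induction_on generalizing x with
  | _ n ih =>
  by_cases hx : x ∈ S
  · exact .init x hx
  have hxr : x ≠ r := fun h => hx (h ▸ hr)
  have hzx := hT.depth_parent hxr
  refine .force _ x (ih _ (by omega) _ rfl) (hT.adj_parent hxr).symm fun y hzy hyx => ?_
  rcases hT.parent_eq_or_parent_eq_of_adj hzy with hup | hdown
  · have hzr : hT.parent r x ≠ r := by
      rintro hzr
      rw [hzr, parent_root] at hup
      exact hzy.ne (hzr.trans hup)
    have hyz := hT.depth_parent hzr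
    rw [hup] at hyz
    exact ih _ (by omega) y rfl
  · exact .init y (hS x y hx hyx (hT.ne_root_of_parent_eq hzy hdown) hdown)

variable (r) in
/-- The vertex of each path of `P` nearest to `r`. -/
def pathTops (P : Set (Set V)) : Set V := {t | t = r ∨ ¬ SamePart P t (hT.parent r t)}

theorem eq_of_mem_pathTops (hP : T.IsPathCover P) {t t' : V} (ht : t ∈ hT.pathTops r P)
    (ht' : t' ∈ hT.pathTops r P) (h : SamePart P t t') : t = t' := by
  obtain ⟨p, hp, htp, ht'p⟩ := h
  have hconn := (hP.1 p hp).induce_connected.preconnected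
  simp only [pathTops, Set.mem_ofPred_eq, hP.samePart_iff hp htp, hP.samePart_iff hp ht'p] at ht ht'
  exact hT.eq_of_parent_not_mem hconn htp ht'p ht ht'

variable (r) in
theorem ncard_pathTops_le [Finite V] (hP : T.IsPathCover P) :
    (hT.pathTops r P).ncard ≤ P.ncard := by
  choose part hpart hmem using hP.exists_mem
  refine Set.ncard_le_ncard_of_injOn part (fun t _ => hpart t) (fun t ht t' ht' h => ?_)
  exact hT.eq_of_mem_pathTops hP ht ht' ⟨part t, hpart t, hmem t, h ▸ hmem t'⟩

end Rooted

variable {r : V}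

theorem mem_pathTops_union_of_parent_eq (hT : T.IsTree) (hP : T.IsPathCover P) {ext : V → V}
    (hext : ∀ w y, T.Adj w y → SamePart P w y → T.Adj w (ext w) ∧ SamePart P w (ext w))
    (hr : ¬ T.HasTwoNeighborsInPart P r) {x y : V}
    (hx : x ∉ hT.pathTops r P ∪ ext '' (hT.pathTops r P \ {r})) (hyx : y ≠ x) (hyr : y ≠ r)
    (hxy : hT.parent r y = hT.parent r x) :
    y ∈ hT.pathTops r P ∪ ext '' (hT.pathTops r P \ {r}) := by
  set z := hT.parent r x
  simp only [Set.mem_union, not_or] at hx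
  obtain ⟨hxT, hxE⟩ := hx
  obtain ⟨hxr, hxz⟩ : x ≠ r ∧ SamePart P x z := by simpa [pathTops] using hxT
  by_cases hyT : y ∈ hT.pathTops r P
  · exact .inl hyT
  have hyz : SamePart P y z := by simpa [pathTops, hyr, hxy] using hyT
  have hzx : T.Adj z x := (hT.adj_parent hxr).symm
  have hzy : T.Adj z y := hxy ▸ (hT.adj_parent hyr).symm
  have hzr : z ≠ r := fun hzr => hr ⟨x, y, hyx.symm, hzr ▸ hzx, hzr ▸ hzy,
    hzr ▸ hxz.symm, hzr ▸ hyz.symm⟩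
  have hzT : z ∈ hT.pathTops r P := by
    refine .inr fun hzz => ?_
    rcases hP.eq_or_eq_of_samePart hT.isAcyclic hxz.symm hyz.symm hzz hzx hzy
      (hT.adj_parent hzr) hyx.symm with h | h
    · exact hT.parent_parent_ne hxr h
    · exact hT.parent_parent_ne hyr (hxy ▸ h)
  obtain ⟨hzext, hsame⟩ := hext z x hzx hxz.symm
  rcases hP.eq_or_eq_of_samePart hT.isAcyclic hxz.symm hyz.symm hsame hzx hzy hzext
    hyx.symm with h | h
  · exact absurd (h ▸ Set.mem_image_of_mem ext ⟨hzT, hzr⟩) hxE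
  · exact .inr ⟨z, ⟨hzT, hzr⟩, h⟩

theorem totalForcingNumber_lt_two_mul_ncard [Finite V] (hT : T.IsTree) (hP : T.IsPathCover P)
    {v u : V} (hvu : T.Adj v u) (huv : ¬ SamePart P v u) (hv : ¬ T.HasTwoNeighborsInPart P v) :
    T.totalForcingNumber < 2 * P.ncard := by
  have : Nontrivial V := ⟨v, u, hvu.ne⟩
  have : ∀ w, ∃ e, T.Adj w e ∧ ∀ y, T.Adj w y → SamePart P w y → SamePart P w e := fun w => by
    by_cases h : ∃ y, T.Adj w y ∧ SamePart P w y
    · obtain ⟨y, hy, hs⟩ := h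
      exact ⟨y, hy, fun _ _ _ => hs⟩
    · obtain ⟨y, hy⟩ := hT.connected.preconnected.exists_adj_of_nontrivial w
      exact ⟨y, hy, fun y' h₁ h₂ => absurd ⟨y', h₁, h₂⟩ h⟩
  choose ext hext using this
  set tops := hT.pathTops v P
  set S := tops ∪ ext '' (tops \ {v})
  have hvT : v ∈ tops := .inl rfl
  have huT : u ∈ tops := .inr fun h => huv (hT.parent_eq_root_of_adj hvu ▸ h).symm
  have hzf : T.IsZeroForcingSet S :=
    hT.isZeroForcingSet_of_forall_sibling_mem v (.inl hvT) fun x y hx hyx hyv hxy =>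
      hT.mem_pathTops_union_of_parent_eq hP (fun w y h₁ h₂ => ⟨(hext w).1, (hext w).2 y h₁ h₂⟩)
        hv hx hyx hyv hxy
  have htot : ∀ s ∈ S, ∃ t ∈ S, T.Adj s t := by
    rintro s (hs | ⟨t, ht, rfl⟩)
    · by_cases hsv : s = v
      · exact ⟨u, .inl huT, hsv ▸ hvu⟩
      · exact ⟨ext s, .inr ⟨s, ⟨hs, hsv⟩, rfl⟩, (hext s).1⟩
    · exact ⟨t, .inl ht.1, (hext t).1.symm⟩
  have hS : S.ncard < 2 * tops.ncard := calc
    S.ncard ≤ tops.ncard + (ext '' (tops \ {v})).ncard := Set.ncard_union_le _ _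
    _ ≤ tops.ncard + (tops \ {v}).ncard := by grw [Set.ncard_image_le]
    _ < 2 * tops.ncard := by
      have := Set.ncard_sdiff_singleton_add_one hvT
      omega
  calc T.totalForcingNumber ≤ S.ncard := Nat.sInf_le ⟨S, ⟨hzf, htot⟩, rfl⟩
    _ < 2 * tops.ncard := hS
    _ ≤ 2 * P.ncard := by grw [hT.ncard_pathTops_le v hP]

theorem crossEdgesAtInteriors [Finite V] (hT : T.IsTree)
    (h : T.totalForcingNumber = 2 * T.pathCoverNumber) (hP : T.IsPathCover P)
    (hPc : P.ncard = T.pathCoverNumber) : T.CrossEdgesAtInteriors P := fun _ _ hxy hn => by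
  by_contra hx
  have := hT.totalForcingNumber_lt_two_mul_ncard hP hxy hn hx
  omega

theorem exists_child_samePart_not_samePart (hT : T.IsTree) (hP' : T.IsPathCover P')
    (hcross : T.CrossEdgesAtInteriors P) {x : V} (hx : x ≠ r) (h : ¬ SamePart P x (hT.parent r x))
    (h' : SamePart P' x (hT.parent r x)) :
    ∃ c, hT.parent r c = x ∧ c ≠ r ∧ SamePart P c x ∧ ¬ SamePart P' c x := by
  obtain ⟨c₁, c₂, hne, h₁, h₂, hs₁, hs₂⟩ := hcross x _ (hT.adj_parent hx) h
  have hchild (c : V) (hc : T.Adj x c) (hs : SamePart P x c) : hT.parent r c = x ∧ c ≠ r := by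
    have hpc := (hT.parent_eq_or_parent_eq_of_adj hc).resolve_left fun hpc => h (hpc ▸ hs)
    exact ⟨hpc, hT.ne_root_of_parent_eq hc hpc⟩
  have hnot : ¬ (SamePart P' x c₁ ∧ SamePart P' x c₂) := fun ⟨hs₁', hs₂'⟩ => by
    rcases hP'.eq_or_eq_of_samePart hT.isAcyclic hs₁' hs₂' h' h₁ h₂ (hT.adj_parent hx) hne
      with he | he
    · exact h (he ▸ hs₁)
    · exact h (he ▸ hs₂)
  rcases not_and_or.mp hnot with hn | hn
  · exact ⟨c₁, hchild c₁ h₁ hs₁ |>.1, hchild c₁ h₁ hs₁ |>.2, hs₁.symm, fun hc => hn hc.symm⟩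
  · exact ⟨c₂, hchild c₂ h₂ hs₂ |>.1, hchild c₂ h₂ hs₂ |>.2, hs₂.symm, fun hc => hn hc.symm⟩

theorem exists_child_not_samePart_iff (hT : T.IsTree) (hP : T.IsPathCover P)
    (hP' : T.IsPathCover P') (hcross : T.CrossEdgesAtInteriors P)
    (hcross' : T.CrossEdgesAtInteriors P') {x : V} (hx : x ≠ r)
    (h : ¬ (SamePart P x (hT.parent r x) ↔ SamePart P' x (hT.parent r x))) :
    ∃ c, hT.parent r c = x ∧ c ≠ r ∧ ¬ (SamePart P c x ↔ SamePart P' c x) := by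
  by_cases hs : SamePart P x (hT.parent r x)
  · obtain ⟨c, hc, hcr, hs', hn⟩ :=
      hT.exists_child_samePart_not_samePart hP hcross' hx (fun h' => h (iff_of_true hs h')) hs
    exact ⟨c, hc, hcr, fun hiff => hn (hiff.2 hs')⟩
  · obtain ⟨c, hc, hcr, hs', hn⟩ := hT.exists_child_samePart_not_samePart hP' hcross hx hs
      (by_contra fun h' => h (iff_of_false hs h'))
    exact ⟨c, hc, hcr, fun hiff => hn (hiff.1 hs')⟩

theorem samePart_iff_of_adj [Finite V] (hT : T.IsTree) (hP : T.IsPathCover P)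
    (hP' : T.IsPathCover P') (hcross : T.CrossEdgesAtInteriors P)
    (hcross' : T.CrossEdgesAtInteriors P') {x y : V} (hxy : T.Adj x y) :
    SamePart P x y ↔ SamePart P' x y := by
  by_contra hne
  set D := {c | c ≠ x ∧ ¬ (SamePart P c (hT.parent x c) ↔ SamePart P' c (hT.parent x c))}
  have hyD : y ∈ D := by
    refine ⟨hxy.ne.symm, ?_⟩
    rw [hT.parent_eq_root_of_adj hxy]
    exact fun hiff => hne ⟨fun h => (hiff.1 h.symm).symm, fun h => (hiff.2 h.symm).symm⟩
  obtain ⟨c, ⟨hcx, hc⟩, hmax⟩ := D.exists_max_image (hT.depth x) D.toFinite ⟨y, hyD⟩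
  obtain ⟨d, hd, hdx, hdiff⟩ := hT.exists_child_not_samePart_iff hP hP' hcross hcross' hcx hc
  have := hmax d ⟨hdx, hd ▸ hdiff⟩
  have := hT.depth_parent hdx
  rw [hd] at this
  omega

theorem eq_of_crossEdgesAtInteriors [Finite V] (hT : T.IsTree) (hP : T.IsPathCover P)
    (hP' : T.IsPathCover P') (hcross : T.CrossEdgesAtInteriors P)
    (hcross' : T.CrossEdgesAtInteriors P') : P = P' :=
  hP.eq_of_samePart_iff_of_adj hP' fun _ _ hxy =>
    hT.samePart_iff_of_adj hP hP' hcross hcross' hxy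

end IsTree

end SimpleGraph

theorem stmt12 {V : Type*} [Fintype V] (T : SimpleGraph V) (hT : T.IsTree)
    (hn : 2 ≤ Fintype.card V)
    (h : T.totalForcingNumber = 2 * T.pathCoverNumber) :
    ∃ P : Set (Set V), T.IsPathCover P ∧ P.ncard = T.pathCoverNumber ∧
      (∀ Q : Set (Set V), T.IsPathCover Q → Q.ncard = T.pathCoverNumber → Q = P) ∧
      ∀ p ∈ P, ∃ (a b : V) (w : T.Walk a b), w.IsPath ∧
        {x | x ∈ w.support} = p ∧ a ≠ b ∧ T.IsLeaf a ∧ T.IsLeaf b := by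
  have : Nontrivial V := Fintype.one_lt_card_iff_nontrivial.mp hn
  obtain ⟨P, hP, hPc⟩ := T.exists_isPathCover_ncard_eq_pathCoverNumber
  have hcross := hT.crossEdgesAtInteriors h hP hPc
  refine ⟨P, hP, hPc, fun Q hQ hQc => ?_, fun p hp => hP.exists_isPath_isLeaf hT hcross hp⟩
  exact hT.eq_of_crossEdgesAtInteriors hQ hP (hT.crossEdgesAtInteriors h hQ hQc) hcross
end

section
/- If T is a tree with at least 2 vertices, then F_t(T) ≤ α'(T) + pc(T), where α'(T) is the matching number and pc(T) the path cover number. -/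
/-!
Root the tree at `r` and fix a minimum path cover. In each path the vertex closest to `r` is its
apex; every other vertex of the path has its parent in the path, and no vertex has three
neighbours in its own path. Colour all apices, one child of the apex inside each nontrivial path,
and the parent of every childless apex whose parent is not an apex itself (this keeps the set
total). Going down the tree, a coloured vertex forces its child in its own path, since its other
children are apices or the chosen child. Besides the `pc(T)` apices, every coloured vertex is
matched to an apex along pairwise disjoint edges (a chosen child to its apex, a parent to its
childless apex child), so there are at most `α'(T)` of them.
-/

namespace SimpleGraph

variable {V : Type*} {G T : SimpleGraph V}

lemma IsTotalForcingSet.totalForcingNumber_le {S : Set V} (hS : G.IsTotalForcingSet S) :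
    G.totalForcingNumber ≤ S.ncard :=
  Nat.sInf_le ⟨S, hS, rfl⟩

lemma ncard_le_matchingNumber [Finite V] {X : Set V} {f : V → V}
    (hadj : ∀ x ∈ X, G.Adj x (f x)) (hfX : ∀ x ∈ X, f x ∉ X) (hf : X.InjOn f) :
    X.ncard ≤ G.matchingNumber := by
  let M : G.Subgraph := ⨆ x : X, G.subgraphOfAdj (hadj x x.2)
  have hM : M.IsMatching := by
    refine Subgraph.IsMatching.iSup (fun x => .subgraphOfAdj _) fun x y hxy => ?_
    have hx := x.2
    have hy := y.2
    have hne : (x : V) ≠ y := Subtype.coe_ne_coe.mpr hxy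
    have hfne : f x ≠ f y := fun h => hne (hf hx hy h)
    refine Set.disjoint_of_subset (Subgraph.support_subset_verts _)
      (Subgraph.support_subset_verts _) ?_
    simp only [subgraphOfAdj_verts, Set.disjoint_insert_left, Set.disjoint_insert_right,
      Set.disjoint_singleton, Set.mem_insert_iff, Set.mem_singleton_iff]
    grind
  have hinj : X.InjOn fun x => s(x, f x) := by
    intro x hx y hy h
    rcases Sym2.eq_iff.mp h with ⟨h, -⟩ | ⟨h, -⟩
    · exact h
    · exact absurd (h ▸ hx) (hfX y hy)
  have hsub : (fun x => s(x, f x)) '' X ⊆ M.edgeSet := by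
    rintro _ ⟨x, hx, rfl⟩
    rw [Subgraph.edgeSet_iSup]
    exact Set.mem_iUnion.mpr ⟨⟨x, hx⟩, by simp⟩
  have hbdd : BddAbove {n | ∃ M : G.Subgraph, M.IsMatching ∧ M.edgeSet.ncard = n} :=
    ⟨Nat.card (Sym2 V), by
      rintro _ ⟨M, -, rfl⟩
      exact Set.ncard_le_card _⟩
  calc X.ncard = ((fun x => s(x, f x)) '' X).ncard := hinj.ncard_image.symm
    _ ≤ M.edgeSet.ncard := Set.ncard_le_ncard hsub (Set.toFinite _)
    _ ≤ G.matchingNumber := le_csSup hbdd ⟨M, hM, rfl⟩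

lemma exists_isPathCover_ncard_eq (G : SimpleGraph V) :
    ∃ P : Set (Set V), G.IsPathCover P ∧ P.ncard = G.pathCoverNumber := by
  refine Nat.sInf_mem (s := {n | ∃ P, G.IsPathCover P ∧ P.ncard = n})
    ⟨_, Set.range fun v : V => ({v} : Set V), ⟨?_, ?_, ?_⟩, rfl⟩
  · rintro _ ⟨v, rfl⟩
    exact ⟨v, v, .nil, .nil, by simp⟩
  · rintro _ ⟨u, rfl⟩ _ ⟨v, rfl⟩ huv
    simpa [Function.onFun] using fun h : u = v => huv (h ▸ rfl)
  · simpa [Set.sUnion_range] using Set.iUnion_of_singleton V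

lemma IsPathSet.exists_eq_support_union {Q : Set V} (hQ : G.IsPathSet Q) {x : V} (hx : x ∈ Q) :
    ∃ (a b : V) (p : G.Walk x a) (q : G.Walk x b), p.IsPath ∧ q.IsPath ∧
      Q = {y | y ∈ p.support ∨ y ∈ q.support} := by
  obtain ⟨u, v, w, hw, rfl⟩ := hQ
  obtain ⟨p, q, hp, hq, rfl⟩ := hw.mem_support_iff_exists_append.mp hx
  refine ⟨u, v, p.reverse, q, hp.reverse, hq, ?_⟩
  ext y
  simp [Walk.mem_support_append_iff]

lemma IsAcyclic.encard_neighborSet_inter_le_two (hG : G.IsAcyclic) {Q : Set V}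
    (hQ : G.IsPathSet Q) {x : V} (hx : x ∈ Q) : (G.neighborSet x ∩ Q).encard ≤ 2 := by
  obtain ⟨a, b, p, q, hp, hq, rfl⟩ := hQ.exists_eq_support_union hx
  have hsub : G.neighborSet x ∩ {y | y ∈ p.support ∨ y ∈ q.support} ⊆ {p.snd, q.snd} := by
    rintro y ⟨hxy, hy | hy⟩
    · exact .inl (hG.eq_snd_of_adj_start hp hxy hy)
    · exact .inr (hG.eq_snd_of_adj_start hq hxy hy)
  calc _ ≤ ({p.snd, q.snd} : Set V).encard := Set.encard_le_encard hsub
    _ ≤ 2 := (Set.encard_insert_le _ _).trans (by rw [Set.encard_singleton]; rfl)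

def IsParent (G : SimpleGraph V) (r x v : V) : Prop :=
  G.Adj x v ∧ G.dist r v = G.dist r x + 1

lemma Connected.exists_isParent (hG : G.Connected) {r v : V} (hv : v ≠ r) :
    ∃ x, G.IsParent r x v := by
  obtain ⟨p, -, hlen⟩ := hG.exists_path_of_dist r v
  obtain ⟨x, hvx, q, hq⟩ := Walk.exists_eq_cons_of_ne hv p.reverse
  have hqlen : q.length + 1 = G.dist r v := by
    rw [← hlen, ← p.length_reverse, hq, Walk.length_cons]
  have hle : G.dist r x ≤ q.length := q.length_reverse ▸ dist_le q.reverse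
  refine ⟨x, hvx.symm, ?_⟩
  rcases hvx.diff_dist_adj (u := r) with h | h | h <;> omega

lemma IsTree.isParent_or_isParent (hT : T.IsTree) (r : V) {x y : V} (h : T.Adj x y) :
    T.IsParent r x y ∨ T.IsParent r y x :=
  (hT.dist_eq_dist_add_one_of_adj r h).symm.imp (⟨h, ·⟩) (⟨h.symm, ·⟩)

lemma dist_le_length_of_mem_support {r u v : V} (p : G.Walk r v) (hu : u ∈ p.support) :
    G.dist r u ≤ p.length := by
  classical
  exact (dist_le _).trans (p.length_takeUntil_le_length hu)

lemma IsTree.eq_of_isParent (hT : T.IsTree) {r x y v : V} (hx : T.IsParent r x v)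
    (hy : T.IsParent r y v) : x = y := by
  obtain ⟨p, hp, -⟩ := hT.connected.exists_path_of_dist r v
  -- every parent of `v` lies on the path from `r` to `v`, hence is its penultimate vertex
  have key : ∀ z, T.IsParent r z v → z = p.penultimate := by
    rintro z ⟨hzv, hd⟩
    obtain ⟨q, hq, hqlen⟩ := hT.connected.exists_path_of_dist r z
    have hvq : v ∉ q.support := fun hv => by
      have := dist_le_length_of_mem_support q hv
      omega
    exact hT.isAcyclic.eq_penultimate_of_adj_end hp hzv.symm
      (hT.isAcyclic.mem_support_of_ne_mem_support_of_adj_of_isPath hp hq hzv.symm hvq)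
  rw [key x hx, key y hy]

lemma IsTree.isParent_mem_support (hT : T.IsTree) {r x y z b : V} {p : T.Walk x b}
    (hp : p.IsPath) (hy : y ∈ p.support) (hyx : y ≠ x) (hd : T.dist r y ≤ T.dist r x)
    (hz : T.IsParent r z x) : z ∈ p.support := by
  -- after a first step down to a child of `x`, the path would have to pass through `x` again
  -- to get back to depth `dist r x`
  induction p generalizing z with
  | nil => exact absurd (by simpa using hy) hyx
  | @cons a c b hac q ih =>
    rw [Walk.cons_isPath_iff] at hp
    rcases hT.isParent_or_isParent r hac with hchild | hparent
    · have hyq : y ∈ q.support := by simpa [hyx] using hy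
      have hyc : y ≠ c := by rintro rfl; have := hchild.2; omega
      exact absurd (ih hp.1 hyq hyc (by have := hchild.2; omega) hchild) hp.2
    · rw [hT.eq_of_isParent hz hparent]
      simp

lemma IsTree.isParent_mem_of_isPathSet (hT : T.IsTree) {r x y z : V} {Q : Set V}
    (hQ : T.IsPathSet Q) (hx : x ∈ Q) (hy : y ∈ Q) (hyx : y ≠ x)
    (hd : T.dist r y ≤ T.dist r x) (hz : T.IsParent r z x) : z ∈ Q := by
  obtain ⟨a, b, p, q, hp, hq, rfl⟩ := hQ.exists_eq_support_union hx
  rcases hy with hy | hy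
  · exact .inl (hT.isParent_mem_support hp hy hyx hd hz)
  · exact .inr (hT.isParent_mem_support hq hy hyx hd hz)

/-- `top v` is the apex of the part containing `v` in a path cover of `T` rooted at `r`, reduced to
the properties the forcing argument uses; parts are identified with their apices. -/
structure IsApexMap (T : SimpleGraph V) (r : V) (top : V → V) : Prop where
  top_top (v : V) : top (top v) = top v
  exists_isParent (v : V) : v ≠ top v → ∃ x, T.IsParent r x v ∧ top x = top v
  encard_le_two (x : V) : (T.neighborSet x ∩ top ⁻¹' {top x}).encard ≤ 2

open Classical in
noncomputable def apexChild (T : SimpleGraph V) (r : V) (top : V → V) (a : V) : V :=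
  if h : ∃ c, T.IsParent r a c ∧ top c = a then h.choose else a

/-- A childless apex; it forms a part on its own (`IsApexMap.top_ne_of_isSingletonLeaf`). -/
def IsSingletonLeaf (T : SimpleGraph V) (r : V) (top : V → V) (u : V) : Prop :=
  top u = u ∧ ∀ c, ¬T.IsParent r u c

/-- The vertices coloured besides the apices; each is matched to an apex below. -/
def matchedVertices (T : SimpleGraph V) (r : V) (top : V → V) : Set V :=
  {x | x ≠ top x ∧
    (T.apexChild r top (top x) = x ∨ ∃ u, T.IsParent r x u ∧ T.IsSingletonLeaf r top u)}

namespace IsApexMap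

variable {r : V} {top : V → V}

lemma eq_or_eq_or_eq (htop : T.IsApexMap r top) {x y₁ y₂ y₃ : V}
    (hy : {y₁, y₂, y₃} ⊆ T.neighborSet x ∩ top ⁻¹' {top x}) : y₁ = y₂ ∨ y₁ = y₃ ∨ y₂ = y₃ := by
  by_contra! h
  have := (Set.encard_le_encard hy).trans (htop.encard_le_two x)
  rw [Set.encard_insert_of_notMem (by simp [h.1, h.2.1]), Set.encard_pair h.2.2] at this
  exact absurd this (by decide)

lemma top_eq_of_isParent (htop : T.IsApexMap r top) (hT : T.IsTree) {x z : V}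
    (hxz : T.IsParent r x z) (hne : top z ≠ top x) : top z = z := by
  by_contra h
  obtain ⟨y, hyz, hy⟩ := htop.exists_isParent z (Ne.symm h)
  rw [hT.eq_of_isParent hyz hxz] at hy
  exact hne hy.symm

lemma exists_isParent_top (htop : T.IsApexMap r top) {v : V} (hv : v ≠ top v) :
    ∃ c, T.IsParent r (top v) c ∧ top c = top v := by
  induction hn : T.dist r v using Nat.strong_induction_on generalizing v with
  | _ n ih =>
  obtain ⟨x, hxv, hx⟩ := htop.exists_isParent v hv
  by_cases hxtop : x = top x
  · exact ⟨v, hx ▸ hxtop ▸ hxv, rfl⟩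
  · rw [← hx]
    exact ih _ (by have := hxv.2; omega) hxtop rfl

lemma apexChild_spec (htop : T.IsApexMap r top) {v : V} (hv : v ≠ top v) :
    T.IsParent r (top v) (T.apexChild r top (top v)) ∧
      top (T.apexChild r top (top v)) = top v := by
  have h := htop.exists_isParent_top hv
  rw [apexChild, dif_pos h]
  exact h.choose_spec

lemma top_ne_of_isSingletonLeaf (htop : T.IsApexMap r top) {u v : V}
    (hu : T.IsSingletonLeaf r top u) (hv : v ≠ top v) : top v ≠ u := by
  rintro rfl
  obtain ⟨c, hc, -⟩ := htop.exists_isParent_top hv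
  exact hu.2 c hc

lemma mem_of_isParent_of_isParent (htop : T.IsApexMap r top) (hT : T.IsTree) {x v z : V}
    (hxv : T.IsParent r x v) (hxz : T.IsParent r x z) (hzv : z ≠ v) (hv : v ≠ top v)
    (hx : top x = top v) (hvS : v ∉ T.matchedVertices r top) :
    z ∈ Set.range top ∪ T.matchedVertices r top := by
  by_cases hz : top z = top x
  swap
  · exact .inl ⟨z, htop.top_eq_of_isParent hT hxz hz⟩
  have hxv' := hxv.2
  have hxz' := hxz.2
  have hxtop : x = top x := by
    by_contra hxtop
    obtain ⟨w, hwx, hw⟩ := htop.exists_isParent x hxtop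
    have hwx' := hwx.2
    rcases htop.eq_or_eq_or_eq (x := x) (y₁ := v) (y₂ := z) (y₃ := w)
      (by simp [Set.insert_subset_iff, hxv.1, hxz.1, hwx.1.symm, hx, hz, hw]) with
      h | h | h
    · exact hzv h.symm
    · subst h; omega
    · subst h; omega
  obtain ⟨hc, hctop⟩ := htop.apexChild_spec hv
  set c := T.apexChild r top (top v)
  rw [← hx, ← hxtop] at hc
  have hcv : c ≠ v := fun h => hvS ⟨hv, .inl h⟩
  have hcz : c = z := by
    rcases htop.eq_or_eq_or_eq (x := x) (y₁ := v) (y₂ := z) (y₃ := c)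
      (by simp [Set.insert_subset_iff, hxv.1, hxz.1, hc.1, hx, hz, hctop]) with h | h | h
    · exact absurd h.symm hzv
    · exact absurd h.symm hcv
    · exact h.symm
  refine .inr ⟨fun h => hxz.1.ne (hxtop.trans (hz.symm.trans h.symm)), .inl ?_⟩
  rwa [hz, hx]

theorem isZeroForcingSet (htop : T.IsApexMap r top) (hT : T.IsTree) :
    T.IsZeroForcingSet (Set.range top ∪ T.matchedVertices r top) := by
  intro v
  induction hn : T.dist r v using Nat.strong_induction_on generalizing v with
  | _ n ih =>
  by_cases hvS : v ∈ Set.range top ∪ T.matchedVertices r top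
  · exact .init v hvS
  have hv : v ≠ top v := fun h => hvS (.inl ⟨v, h.symm⟩)
  obtain ⟨x, hxv, hx⟩ := htop.exists_isParent v hv
  have hxv' := hxv.2
  refine .force x v (ih _ (by omega) x rfl) hxv.1 fun z hxz hzv => ?_
  rcases hT.isParent_or_isParent r hxz with hz | hz
  · exact .init z (htop.mem_of_isParent_of_isParent hT hxv hz hzv hv hx (hvS <| .inr ·))
  · exact ih _ (by have := hz.2; omega) z rfl

lemma exists_adj_mem_of_top_eq (htop : T.IsApexMap r top) (hT : T.IsTree)
    (hr : ∃ c, T.Adj r c) {a : V} (ha : top a = a) :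
    ∃ u ∈ Set.range top ∪ T.matchedVertices r top, T.Adj a u := by
  by_cases hpart : ∃ v, v ≠ top v ∧ top v = a
  · obtain ⟨v, hv, rfl⟩ := hpart
    obtain ⟨hc, hctop⟩ := htop.apexChild_spec hv
    set c := T.apexChild r top (top v)
    exact ⟨c, .inr ⟨fun h => hc.1.ne (h.trans hctop).symm, .inl (by rw [hctop])⟩, hc.1⟩
  push Not at hpart
  by_cases hchild : ∃ c, T.IsParent r a c
  · obtain ⟨c, hc⟩ := hchild
    have hca : top c ≠ a := fun h => hpart c (fun h' => hc.1.ne (h'.trans h).symm) h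
    exact ⟨c, .inl ⟨c, htop.top_eq_of_isParent hT hc (by rwa [ha])⟩, hc.1⟩
  push Not at hchild
  have har : a ≠ r := by
    rintro rfl
    obtain ⟨c, hc⟩ := hr
    exact hchild c ⟨hc, by simp [(dist_eq_one_iff_adj).mpr hc]⟩
  obtain ⟨x, hx⟩ := hT.connected.exists_isParent har
  by_cases hxtop : x = top x
  · exact ⟨x, .inl ⟨x, hxtop.symm⟩, hx.1.symm⟩
  · exact ⟨x, .inr ⟨hxtop, .inr ⟨a, hx, ha, hchild⟩⟩, hx.1.symm⟩

theorem exists_adj_mem (htop : T.IsApexMap r top) (hT : T.IsTree) (hr : ∃ c, T.Adj r c) :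
    ∀ v ∈ Set.range top ∪ T.matchedVertices r top,
      ∃ u ∈ Set.range top ∪ T.matchedVertices r top, T.Adj v u := by
  rintro _ (⟨v, rfl⟩ | ⟨hv, hchild | ⟨u, hvu, hu⟩⟩)
  · exact htop.exists_adj_mem_of_top_eq hT hr (htop.top_top v)
  · exact ⟨_, .inl ⟨_, rfl⟩, (hchild ▸ (htop.apexChild_spec hv).1.1).symm⟩
  · exact ⟨u, .inl ⟨u, hu.1⟩, hvu.1⟩

theorem ncard_matchedVertices_le [Finite V] (htop : T.IsApexMap r top) (hT : T.IsTree) :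
    (T.matchedVertices r top).ncard ≤ T.matchingNumber := by
  classical
  -- a parent of a singleton leaf is matched to that leaf, a chosen child to its apex
  let mate : V → V := fun x =>
    if h : ∃ u, T.IsParent r x u ∧ T.IsSingletonLeaf r top u then h.choose else top x
  have top_mate (x : V) : top (mate x) = mate x := by
    dsimp only [mate]
    split_ifs with h
    · exact h.choose_spec.2.1
    · exact htop.top_top x
  refine ncard_le_matchingNumber (f := mate) (fun x ⟨hx, hmatched⟩ => ?_)
    (fun x _ hmx => hmx.1 (top_mate x).symm) fun x hx y hy hxy => ?_
  · dsimp only [mate]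
    split_ifs with h
    · exact h.choose_spec.1.1
    · exact (hmatched.resolve_right h ▸ (htop.apexChild_spec hx).1.1).symm
  · dsimp only [mate] at hxy
    split_ifs at hxy with hxleaf hyleaf hyleaf
    · exact hT.eq_of_isParent hxleaf.choose_spec.1 (hxy ▸ hyleaf.choose_spec.1)
    · exact absurd hxy.symm (htop.top_ne_of_isSingletonLeaf hxleaf.choose_spec.2 hy.1)
    · exact absurd hxy (htop.top_ne_of_isSingletonLeaf hyleaf.choose_spec.2 hx.1)
    · rw [← hx.2.resolve_right hxleaf, ← hy.2.resolve_right hyleaf, hxy]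

theorem totalForcingNumber_le [Finite V] (htop : T.IsApexMap r top) (hT : T.IsTree)
    (hr : ∃ c, T.Adj r c) :
    T.totalForcingNumber ≤ T.matchingNumber + (Set.range top).ncard :=
  calc T.totalForcingNumber
      ≤ (Set.range top ∪ T.matchedVertices r top).ncard :=
        IsTotalForcingSet.totalForcingNumber_le
          ⟨htop.isZeroForcingSet hT, htop.exists_adj_mem hT hr⟩
    _ ≤ (Set.range top).ncard + (T.matchedVertices r top).ncard := Set.ncard_union_le _ _
    _ ≤ T.matchingNumber + (Set.range top).ncard := by
        have := htop.ncard_matchedVertices_le hT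
        omega

end IsApexMap

theorem IsPathCover.exists_isApexMap [Finite V] (hT : T.IsTree) (r : V) {P : Set (Set V)}
    (hP : T.IsPathCover P) :
    ∃ top : V → V, T.IsApexMap r top ∧ (Set.range top).ncard ≤ P.ncard := by
  obtain ⟨hpath, hdisj, hcover⟩ := hP
  have hpart (v : V) : ∃ Q ∈ P, v ∈ Q := Set.mem_sUnion.mp (hcover ▸ Set.mem_univ v)
  choose part hpartP hmem using hpart
  have part_eq {Q : Set V} (hQ : Q ∈ P) {v : V} (hv : v ∈ Q) : part v = Q :=
    hdisj.elim (hpartP v) hQ (Set.not_disjoint_iff.mpr ⟨v, hmem v, hv⟩)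
  have hapex (Q : Set V) (hQ : Q ∈ P) : ∃ a ∈ Q, ∀ b ∈ Q, T.dist r a ≤ T.dist r b := by
    obtain ⟨u, -, w, -, rfl⟩ := hpath Q hQ
    exact Set.exists_min_image _ _ (Set.toFinite _) ⟨u, w.start_mem_support⟩
  have : Nonempty V := hT.connected.nonempty
  choose! apex hapexQ hapexmin using hapex
  have part_apex (v : V) : part (apex (part v)) = part v :=
    part_eq (hpartP v) (hapexQ _ (hpartP v))
  refine ⟨fun v => apex (part v),
    ⟨fun v => by simp only [part_apex], fun v hv => ?_, fun x => ?_⟩, ?_⟩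
  · have hvr : v ≠ r := by
      rintro rfl
      have := hapexmin _ (hpartP v) _ (hmem v)
      rw [dist_self, Nat.le_zero, hT.connected.dist_eq_zero_iff] at this
      exact hv this
    obtain ⟨x, hx⟩ := hT.connected.exists_isParent hvr
    have hxQ : x ∈ part v := hT.isParent_mem_of_isPathSet (hpath _ (hpartP v)) (hmem v)
      (hapexQ _ (hpartP v)) (Ne.symm hv) (hapexmin _ (hpartP v) _ (hmem v)) hx
    exact ⟨x, hx, by rw [part_eq (hpartP v) hxQ]⟩
  · refine (Set.encard_le_encard ?_).trans
      (hT.isAcyclic.encard_neighborSet_inter_le_two (hpath _ (hpartP x)) (hmem x))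
    rintro y ⟨hxy, hy⟩
    refine ⟨hxy, ?_⟩
    have := part_apex y
    rw [show apex (part y) = apex (part x) from hy, part_apex x] at this
    exact this ▸ hmem y
  · calc (Set.range fun v => apex (part v)).ncard ≤ (apex '' P).ncard :=
          Set.ncard_le_ncard (by rintro _ ⟨v, rfl⟩; exact ⟨_, hpartP v, rfl⟩) (Set.toFinite _)
      _ ≤ P.ncard := Set.ncard_image_le (Set.toFinite P)

end SimpleGraph

theorem stmt14 {V : Type*} [Fintype V] (T : SimpleGraph V) (hT : T.IsTree)
    (hn : 2 ≤ Fintype.card V) :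
    T.totalForcingNumber ≤ T.matchingNumber + T.pathCoverNumber := by
  obtain ⟨r⟩ := hT.connected.nonempty
  obtain ⟨v, hvr⟩ := Fintype.exists_ne_of_one_lt_card hn r
  obtain ⟨P, hP, hPcard⟩ := T.exists_isPathCover_ncard_eq
  obtain ⟨top, htop, htopcard⟩ := hP.exists_isApexMap hT r
  obtain ⟨c, hrc, -, -⟩ :=
    SimpleGraph.Walk.exists_eq_cons_of_ne hvr.symm (hT.connected r v).some
  calc T.totalForcingNumber ≤ T.matchingNumber + (Set.range top).ncard :=
        htop.totalForcingNumber_le hT ⟨c, hrc⟩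
    _ ≤ T.matchingNumber + T.pathCoverNumber := by omega
end

section
/- Let T be obtained from a tree T' by attaching at least two pendant leaves to each vertex of a set A ⊆ V(T'), where either A = V(T') or V(T') \ A is an independent set of T' containing no leaf of T'. Then the matching number of T equals |A|. -/
/-- The tree obtained from `T'` by attaching `m a` pendant leaves to each vertex `a ∈ A`. -/
def attachLeaves {V : Type*} (T : SimpleGraph V) (A : Finset V) (m : V → ℕ) :
    SimpleGraph (V ⊕ (Σ a : {x : V // x ∈ A}, Fin (m a.1))) :=
  SimpleGraph.fromRel (fun x y =>
    match x, y with
    | Sum.inl a, Sum.inl b => T.Adj a b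
    | Sum.inl a, Sum.inr p => p.1.1 = a
    | _, _ => False)

/-! The vertices of `A` cover every edge of `T'`, hence every edge of `T`, and a matching has at
most as many edges as any vertex cover has vertices. Conversely, matching each `a ∈ A` with one of
its pendant leaves gives `|A|` disjoint edges. -/

open Function

namespace SimpleGraph

variable {V : Type*} {G : SimpleGraph V}

theorem Subgraph.IsMatching.ncard_edgeSet_le_of_isVertexCover {M : G.Subgraph} (hM : M.IsMatching) {c : Set V}
    (hc : G.IsVertexCover c) (hfin : c.Finite) : M.edgeSet.ncard ≤ c.ncard := by
  classical
  let edgeAt : V → Sym2 V := fun v => if h : ∃ w, M.Adj v w then s(v, h.choose) else s(v, v)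
  have edgeAt_eq : ∀ {v w}, M.Adj v w → edgeAt v = s(v, w) := by
    intro v w hvw
    have h : ∃ w, M.Adj v w := ⟨w, hvw⟩
    simp only [edgeAt, dif_pos h, hM.eq_of_adj_left h.choose_spec hvw]
  have hsub : M.edgeSet ⊆ edgeAt '' c := by
    rintro ⟨v, w⟩ hvw
    rcases hc (M.adj_sub hvw) with hv | hw
    · exact ⟨v, hv, edgeAt_eq hvw⟩
    · exact ⟨w, hw, (edgeAt_eq hvw.symm).trans Sym2.eq_swap⟩
  calc M.edgeSet.ncard ≤ (edgeAt '' c).ncard := Set.ncard_le_ncard hsub (hfin.image _)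
    _ ≤ c.ncard := Set.ncard_image_le hfin

theorem matchingNumber_eq_of_isVertexCover {M : G.Subgraph} (hM : M.IsMatching) {c : Set V}
    (hc : G.IsVertexCover c) (hfin : c.Finite) (hMc : M.edgeSet.ncard = c.ncard) :
    G.matchingNumber = c.ncard :=
  IsGreatest.csSup_eq ⟨⟨M, hM, hMc⟩, by rintro _ ⟨N, hN, rfl⟩; exact hN.ncard_edgeSet_le_of_isVertexCover hc hfin⟩

theorem exists_isMatching_ncard_edgeSet_eq {ι : Type*} {u v : ι → V} (hu : Injective u)
    (hv : Injective v) (huv : ∀ i j, u i ≠ v j) (hadj : ∀ i, G.Adj (u i) (v i)) :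
    ∃ M : G.Subgraph, M.IsMatching ∧ M.edgeSet.ncard = Nat.card ι := by
  refine ⟨⨆ i, G.subgraphOfAdj (hadj i), ?_, ?_⟩
  · refine Subgraph.IsMatching.iSup (fun i => .subgraphOfAdj _) fun i j hij => ?_
    simp [huv, (huv _ _).symm, hu.ne hij.symm, hv.ne hij.symm]
  · have hinj : Injective fun i => s(u i, v i) := by
      intro i j hij
      rcases Sym2.eq_iff.mp hij with ⟨h, -⟩ | ⟨h, -⟩
      · exact hu h
      · exact absurd h (huv i j)
    simp only [Subgraph.edgeSet_iSup, edgeSet_subgraphOfAdj, Set.iUnion_singleton_eq_range]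
    exact Set.ncard_range_of_injective hinj

end SimpleGraph

section attachLeaves

variable {V : Type*} {T : SimpleGraph V} {A : Finset V} {m : V → ℕ}

@[simp]
theorem attachLeaves_adj_inl_inl {a b : V} :
    (attachLeaves T A m).Adj (.inl a) (.inl b) ↔ T.Adj a b := by
  simp [attachLeaves, SimpleGraph.adj_comm, and_iff_right_of_imp SimpleGraph.Adj.ne]

@[simp]
theorem attachLeaves_adj_inl_inr {a : V} {p : Σ a : {x : V // x ∈ A}, Fin (m a.1)} :
    (attachLeaves T A m).Adj (.inl a) (.inr p) ↔ p.1.1 = a := by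
  simp [attachLeaves]

@[simp]
theorem attachLeaves_adj_inr_inl {a : V} {p : Σ a : {x : V // x ∈ A}, Fin (m a.1)} :
    (attachLeaves T A m).Adj (.inr p) (.inl a) ↔ p.1.1 = a := by
  simp [attachLeaves]

@[simp]
theorem not_attachLeaves_adj_inr_inr {p q : Σ a : {x : V // x ∈ A}, Fin (m a.1)} :
    ¬ (attachLeaves T A m).Adj (.inr p) (.inr q) := by
  simp [attachLeaves]

theorem SimpleGraph.IsVertexCover.attachLeaves (hA : T.IsVertexCover A) (m : V → ℕ) :
    (attachLeaves T A m).IsVertexCover (Sum.inl '' A) := by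
  rintro (a | ⟨⟨a, ha⟩, i⟩) (b | ⟨⟨b, hb⟩, j⟩) hab <;>
    simp only [attachLeaves_adj_inl_inl, attachLeaves_adj_inl_inr, attachLeaves_adj_inr_inl,
      not_attachLeaves_adj_inr_inr, Set.mem_image, SetLike.mem_coe, Sum.inl.injEq, reduceCtorEq,
      exists_eq_right, and_false, exists_false, or_false, false_or] at hab ⊢
  · exact hA hab
  · exact hab ▸ hb
  · exact hab ▸ ha

theorem exists_isMatching_attachLeaves_ncard_eq (hm : ∀ a ∈ A, 0 < m a) :
    ∃ M : (attachLeaves T A m).Subgraph, M.IsMatching ∧ M.edgeSet.ncard = A.card := by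
  simpa using SimpleGraph.exists_isMatching_ncard_edgeSet_eq (u := fun a : A => Sum.inl a.1)
    (v := fun a => Sum.inr ⟨a, ⟨0, hm a a.2⟩⟩) (Sum.inl_injective.comp Subtype.val_injective)
    (fun _ _ h => by simp only [Sum.inr.injEq, Sigma.mk.inj_iff] at h; exact h.1) (by simp) (by simp)

theorem matchingNumber_attachLeaves (hA : T.IsVertexCover A) (hm : ∀ a ∈ A, 0 < m a) :
    (attachLeaves T A m).matchingNumber = A.card := by
  obtain ⟨M, hM, hMcard⟩ := exists_isMatching_attachLeaves_ncard_eq (T := T) hm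
  rw [SimpleGraph.matchingNumber_eq_of_isVertexCover hM (hA.attachLeaves m)
    (A.finite_toSet.image _)] <;>
    simp only [hMcard, Set.ncard_image_of_injective _ Sum.inl_injective, Set.ncard_coe_finset]

end attachLeaves

theorem stmt15_general {V : Type*} (T : SimpleGraph V)
    (A : Finset V) (m : V → ℕ) (hm : ∀ a ∈ A, 2 ≤ m a)
    (hA : (A : Set V) = Set.univ ∨
      ((∀ x ∉ A, ∀ y ∉ A, ¬ T.Adj x y) ∧ ∀ x ∉ A, ¬ T.IsLeaf x)) :
    (attachLeaves T A m).matchingNumber = A.card := by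
  refine matchingNumber_attachLeaves ?_ fun a ha => (hm a ha).trans_lt' two_pos
  rcases hA with hA | ⟨hindep, -⟩
  · exact hA ▸ SimpleGraph.isVertexCover_univ
  · intro x y hxy
    by_contra! h
    exact hindep x h.1 y h.2 hxy

theorem stmt15 {V : Type*} [Fintype V] [DecidableEq V] (T : SimpleGraph V)
    (hT : T.IsTree) (A : Finset V) (m : V → ℕ) (hm : ∀ a ∈ A, 2 ≤ m a)
    (hA : (A : Set V) = Set.univ ∨
      ((∀ x ∉ A, ∀ y ∉ A, ¬ T.Adj x y) ∧ ∀ x ∉ A, ¬ T.IsLeaf x)) :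
    (attachLeaves T A m).matchingNumber = A.card :=
  stmt15_general T A m hm hA
end
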